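/- arXiv:2509.23365 — 9 statements merged into one kernel-verified Lean document; each statement's English description precedes it below -/
import Mathlib

section
/- Let d be a positive integer, Voc a finite set with V ⊆ Voc, and suppose the vectors {E(v)}_{v∈Voc} ∪ {E_s(v)}_{v∈Voc} in ℝ^d satisfy ⟨E(u), E(v)⟩ = 1{u=v}, ⟨E_s(u), E_s(v)⟩ = 1{u=v}, and ⟨E(u), E_s(v)⟩ = 0 for all u, v ∈ Voc. Enumerate the edge set E as (s_1→t_1), …, (s_m→t_m), and set h_i = E_s(s_i) + E(t_i) for i ∈ [m], h = Σ_{u∈N_c} λ·E(u), and W = Σ_{u∈V} μ_u·E(u)·E_s(u)^T. Then for every v ∈ V, ⟨E(v), h + Σ_{i=1}^m (h^T W h_i)·h_i⟩ = λ·1{v ∈ N_c} + λ·Σ_{u ∈ N_c : (u→v) ∈ E} μ_u, i.e., the attention output logit equals ξ_v(μ). -/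
open Finset Filter Matrix

variable {V : Type*}

/-- `ball E r j` : set of vertices reachable from `r` within `j` steps along edges in `E`. -/
def ball [Fintype V] [DecidableEq V] (E : Finset (V × V)) (r : V) : ℕ → Finset V
  | 0 => {r}
  | j + 1 => Finset.univ.filter fun v => v ∈ ball E r j ∨ ∃ u ∈ ball E r j, (u, v) ∈ E

/-- in-degree of `v` restricted to sources in `N_c`. -/
def degc [Fintype V] [DecidableEq V] (E : Finset (V × V)) (r : V) (c : ℕ) (v : V) : ℕ :=
  ((ball E r c).filter fun u => (u, v) ∈ E).card

/-- λ = 1/√K with K = |N_c|. -/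
noncomputable def lamc [Fintype V] [DecidableEq V] (E : Finset (V × V)) (r : V) (c : ℕ) : ℝ :=
  1 / Real.sqrt ((ball E r c).card : ℝ)

/-- the logit ξ_v(μ). -/
noncomputable def xi [Fintype V] [DecidableEq V] (E : Finset (V × V)) (r : V) (c : ℕ)
    (μ : V → ℝ) (v : V) : ℝ :=
  lamc E r c * (if v ∈ ball E r c then 1 else 0)
    + lamc E r c * ∑ u ∈ (ball E r c).filter (fun u => (u, v) ∈ E), μ u

/-- BFS loss. -/
noncomputable def bfsLoss [Fintype V] [DecidableEq V] (E : Finset (V × V)) (r : V) (c : ℕ)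
    (μ : V → ℝ) : ℝ :=
  - Real.log ((∑ v ∈ ball E r (c + 1), Real.exp (xi E r c μ v)) /
      ∑ v : V, Real.exp (xi E r c μ v))

/-- edge set of the permuted instance. -/
def permE [Fintype V] [DecidableEq V] (π : Equiv.Perm V) (E : Finset (V × V)) :
    Finset (V × V) :=
  E.image fun e => (π e.1, π e.2)

/-- permutation-averaged BFS loss. -/
noncomputable def avgBfsLoss [Fintype V] [DecidableEq V] (E : Finset (V × V)) (r : V) (c : ℕ)
    (μ : V → ℝ) : ℝ :=
  ((Nat.factorial (Fintype.card V) : ℝ))⁻¹ *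
    ∑ π : Equiv.Perm V, bfsLoss (permE π E) (π r) c μ

/-- coconut loss with target `p`. -/
noncomputable def cocoLoss [Fintype V] [DecidableEq V] (E : Finset (V × V)) (r : V) (c : ℕ)
    (p : V) (μ : V → ℝ) : ℝ :=
  - Real.log (Real.exp (xi E r c μ p) / ∑ v : V, Real.exp (xi E r c μ v))

/-- permutation-averaged coconut loss. -/
noncomputable def avgCocoLoss [Fintype V] [DecidableEq V] (E : Finset (V × V)) (r : V) (c : ℕ)
    (p : V) (μ : V → ℝ) : ℝ :=
  ((Nat.factorial (Fintype.card V) : ℝ))⁻¹ *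
    ∑ π : Equiv.Perm V, cocoLoss (permE π E) (π r) c (π p) μ

/-- the scalar function F. -/
noncomputable def Fc [Fintype V] [DecidableEq V] (E : Finset (V × V)) (r : V) (c : ℕ)
    (x : ℝ) : ℝ :=
  (∑ u ∈ ball E r (c + 1), (degc E r c u : ℝ) *
      Real.exp (lamc E r c * ((if u ∈ ball E r c then 1 else 0) + x * (degc E r c u : ℝ))))
    / ((∑ u ∈ ball E r (c + 1),
        Real.exp (lamc E r c * ((if u ∈ ball E r c then 1 else 0) + x * (degc E r c u : ℝ))))
      + ((Fintype.card V : ℝ) - ((ball E r (c + 1)).card : ℝ)))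

lemma mydot_sum {ι : Type*} {d : ℕ} (s : Finset ι) (f : ι → Fin d → ℝ) (x : Fin d → ℝ) :
    x ⬝ᵥ (∑ i ∈ s, f i) = ∑ i ∈ s, x ⬝ᵥ f i := by
  simp only [dotProduct, Finset.sum_apply, Finset.mul_sum]
  rw [Finset.sum_comm]

lemma mysum_mulVec {ι : Type*} {d : ℕ} (s : Finset ι) (A : ι → Matrix (Fin d) (Fin d) ℝ)
    (x : Fin d → ℝ) : (∑ u ∈ s, A u) *ᵥ x = ∑ u ∈ s, A u *ᵥ x := by
  ext i
  simp only [mulVec, dotProduct, Matrix.sum_apply, Finset.sum_apply, Finset.sum_mul]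
  rw [Finset.sum_comm]

lemma myvmv {d : ℕ} (w vv x : Fin d → ℝ) : vecMulVec w vv *ᵥ x = (vv ⬝ᵥ x) • w := by
  ext i
  simp only [mulVec, vecMulVec_apply, dotProduct, Pi.smul_apply, smul_eq_mul, Finset.sum_mul]
  exact Finset.sum_congr rfl fun k _ => by ring

/-- the attention output logit of the thought-generation forward pass
equals ξ_v(μ) = λ·1{v ∈ N_c} + λ·Σ_{u ∈ N_c : (u→v) ∈ E} μ_u. -/
theorem stmt0 {V Voc : Type*} [Fintype V] [DecidableEq V] [Fintype Voc] [DecidableEq Voc]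
    (E : Finset (V × V)) (r : V) (c : ℕ)
    (d : ℕ) (hd : 0 < d) (j : V ↪ Voc)
    (Emb Es : Voc → Fin d → ℝ)
    (horthE : ∀ u v : Voc, Emb u ⬝ᵥ Emb v = if u = v then (1 : ℝ) else 0)
    (horthS : ∀ u v : Voc, Es u ⬝ᵥ Es v = if u = v then (1 : ℝ) else 0)
    (horthC : ∀ u v : Voc, Emb u ⬝ᵥ Es v = 0)
    (μ : V → ℝ)
    (h : Fin d → ℝ) (hh : h = ∑ u ∈ ball E r c, lamc E r c • Emb (j u))
    (W : Matrix (Fin d) (Fin d) ℝ)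
    (hW : W = ∑ u : V, μ u • vecMulVec (Emb (j u)) (Es (j u)))
    (he : V × V → Fin d → ℝ) (hhe : ∀ e : V × V, he e = Es (j e.1) + Emb (j e.2)) :
    ∀ v : V,
      Emb (j v) ⬝ᵥ (h + ∑ e ∈ E, (h ⬝ᵥ (W *ᵥ he e)) • he e)
        = lamc E r c * (if v ∈ ball E r c then 1 else 0)
          + lamc E r c * ∑ u ∈ (ball E r c).filter (fun u => (u, v) ∈ E), μ u := by

  intro v
  have hEh : ∀ u : V, h ⬝ᵥ Emb (j u) = lamc E r c * (if u ∈ ball E r c then 1 else 0) := by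
    intro u
    rw [hh, dotProduct_comm, mydot_sum]
    simp only [dotProduct_smul, horthE, j.injective.eq_iff, smul_eq_mul, mul_ite, mul_one,
      mul_zero, Finset.sum_ite_eq]
  have hEsHe : ∀ (u : V) (e : V × V), Es (j u) ⬝ᵥ he e = if u = e.1 then (1:ℝ) else 0 := by
    intro u e
    rw [hhe, dotProduct_add, horthS, dotProduct_comm, horthC]
    simp [j.injective.eq_iff]
  have hEHe : ∀ e : V × V, Emb (j v) ⬝ᵥ he e = if v = e.2 then (1:ℝ) else 0 := by
    intro e
    rw [hhe, dotProduct_add, horthE, horthC]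
    simp [j.injective.eq_iff]
  have hcoef : ∀ e : V × V, h ⬝ᵥ (W *ᵥ he e)
      = lamc E r c * (if e.1 ∈ ball E r c then μ e.1 else 0) := by
    intro e
    rw [hW, mysum_mulVec, mydot_sum]
    simp only [smul_mulVec, myvmv, hEsHe, smul_smul, dotProduct_smul, hEh, smul_eq_mul]
    rw [Finset.sum_eq_single e.1 (fun b _ hb => by simp [hb]) (by simp)]
    by_cases h1 : e.1 ∈ ball E r c <;> simp [h1] <;> ring
  rw [dotProduct_add, mydot_sum, dotProduct_comm (Emb (j v)) h, hEh v]
  congr 1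
  simp only [dotProduct_smul, hcoef, hEHe, smul_eq_mul]
  rw [Finset.mul_sum]
  have key : ∀ e ∈ E, lamc E r c * (if e.1 ∈ ball E r c then μ e.1 else 0) *
        (if v = e.2 then (1:ℝ) else 0)
      = if e.1 ∈ ball E r c ∧ e.2 = v then lamc E r c * μ e.1 else 0 := by
    intro e _
    by_cases h1 : e.1 ∈ ball E r c <;> by_cases h2 : v = e.2
    all_goals
      have h2' : (e.2 = v) = (v = e.2) := propext ⟨Eq.symm, Eq.symm⟩
      simp [h1, h2, h2']
  rw [Finset.sum_congr rfl key, ← Finset.sum_filter]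
  refine Finset.sum_nbij' (fun e => e.1) (fun u => (u, v)) ?_ ?_ ?_ ?_ ?_
  · intro e hee
    rw [Finset.mem_filter] at hee
    rw [Finset.mem_filter]
    refine ⟨hee.2.1, ?_⟩
    have : (e.1, v) = e := Prod.ext rfl hee.2.2.symm
    rw [this]; exact hee.1
  · intro u hu
    rw [Finset.mem_filter] at hu
    rw [Finset.mem_filter]
    exact ⟨hu.2, hu.1, rfl⟩
  · intro e hee
    rw [Finset.mem_filter] at hee
    exact Prod.ext rfl hee.2.2.symm
  · intro u _; rfl
  · intro e _; rfl
end

section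
/- Suppose all coordinates of μ ∈ ℝ^V equal a common value μ̄ ∈ ℝ, so that ξ_u(μ) = λ(1{u ∈ N_c} + μ̄·d_u) for all u ∈ V. Then for every v ∈ V, the gradient of the permutation-averaged BFS loss satisfies ∂L^BFS/∂μ_v (μ) = −(exp(−ξ_+(μ))/(n√K)) · ((n − |N_{c+1}|)/(exp(ξ_+(μ)) + n − |N_{c+1}|)) · Σ_{u ∈ V} d_u·exp(ξ_u(μ)); in particular this value is the same for every v ∈ V. -/
open Finset Filter Matrix

variable {V : Type*}

/-!
Relabelling the vertices by `π` turns `ℓ^BFS_π(μ)` into `ℓ^BFS(μ ∘ π)`, so for constant `μ` the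
`π`-th summand of `L^BFS`, as a function of `μ_v`, is `ℓ^BFS` as a function of `μ_{π⁻¹ v}`.
Averaging over `π` therefore averages the partial derivatives `∂ℓ^BFS/∂μ_u` over `u`, and
`∑ u, ∂ℓ^BFS/∂μ_u = λ (1/S - 1/S₊) ∑ w, d_w exp ξ_w`, where `S₊ = exp ξ₊` and
`S = S₊ + (n - |N_{c+1}|)` because the vertices outside `N_{c+1}` have logit `0`.
-/

lemma sum_perm_symm_apply [Fintype V] [DecidableEq V] (g : V → ℝ) (v : V) :
    ∑ π : Equiv.Perm V, g (π.symm v) = (Fintype.card V - 1).factorial * ∑ u, g u := by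
  have hindep : ∀ v', ∑ π : Equiv.Perm V, g (π.symm v') = ∑ π : Equiv.Perm V, g (π.symm v) :=
    fun v' => Fintype.sum_equiv (Equiv.mulLeft (Equiv.swap v v')) _ _ fun π => by
      simp [Equiv.Perm.mul_def]
  have htotal : ∑ v', ∑ π : Equiv.Perm V, g (π.symm v')
      = (Fintype.card V).factorial * ∑ u, g u := by
    rw [sum_comm]
    simp only [Equiv.sum_comp, sum_const, card_univ, Fintype.card_perm, nsmul_eq_mul]
  have hn : Fintype.card V ≠ 0 := (Fintype.card_pos_iff.2 ⟨v⟩).ne'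
  simp only [hindep, sum_const, card_univ, nsmul_eq_mul,
    ← Nat.mul_factorial_pred hn, Nat.cast_mul, mul_assoc] at htotal
  exact mul_left_cancel₀ (by exact_mod_cast hn) htotal

lemma sum_perm_ite_symm_apply_mem [Fintype V] [DecidableEq V] (s : Finset V) (v : V) :
    ∑ π : Equiv.Perm V, (if π.symm v ∈ s then (1 : ℝ) else 0)
      = (Fintype.card V - 1).factorial * s.card := by
  rw [sum_perm_symm_apply (fun u => if u ∈ s then (1 : ℝ) else 0) v, sum_boole,
    filter_mem_eq_inter, univ_inter]

lemma hasDerivAt_neg_log_sum_exp_div_sum_exp {ι : Type*} [Fintype ι] {s : Finset ι}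
    (hs : s.Nonempty) {f : ι → ℝ → ℝ} {f' : ι → ℝ} {x : ℝ}
    (hf : ∀ i, HasDerivAt (f i) (f' i) x) (hf' : ∀ i ∉ s, f' i = 0) :
    HasDerivAt (fun y => -Real.log ((∑ i ∈ s, Real.exp (f i y)) / ∑ i, Real.exp (f i y)))
      ((∑ i, Real.exp (f i x) * f' i)
        * ((∑ i, Real.exp (f i x))⁻¹ - (∑ i ∈ s, Real.exp (f i x))⁻¹)) x := by
  have hpos_s : ∀ y, 0 < ∑ i ∈ s, Real.exp (f i y) := fun y =>
    sum_pos (fun _ _ => Real.exp_pos _) hs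
  have hpos : ∀ y, 0 < ∑ i, Real.exp (f i y) := fun y =>
    sum_pos (fun _ _ => Real.exp_pos _) (hs.mono (subset_univ s))
  have hderiv_s := HasDerivAt.fun_sum (u := s) fun i _ => (hf i).exp
  have hderiv := HasDerivAt.fun_sum (u := univ) fun i _ => (hf i).exp
  have hsupport : ∑ i ∈ s, Real.exp (f i x) * f' i = ∑ i, Real.exp (f i x) * f' i :=
    sum_subset (subset_univ s) fun i _ hi => by rw [hf' i hi, mul_zero]
  have hsplit : (fun y => -Real.log ((∑ i ∈ s, Real.exp (f i y)) / ∑ i, Real.exp (f i y)))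
      = fun y => Real.log (∑ i, Real.exp (f i y)) - Real.log (∑ i ∈ s, Real.exp (f i y)) := by
    funext y
    rw [Real.log_div (hpos_s y).ne' (hpos y).ne', neg_sub]
  rw [hsplit]
  refine ((hderiv.log (hpos x).ne').sub (hderiv_s.log (hpos_s x).ne')).congr_deriv ?_
  rw [hsupport]
  ring

section Graph

variable [Fintype V] [DecidableEq V] (E : Finset (V × V)) (r : V)

lemma mem_permE_apply (π : Equiv.Perm V) (a b : V) : (π a, π b) ∈ permE π E ↔ (a, b) ∈ E := by
  simp [permE, Prod.ext_iff]

lemma ball_permE (π : Equiv.Perm V) (j : ℕ) :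
    ball (permE π E) (π r) j = (ball E r j).map π.toEmbedding := by
  induction j with
  | zero => simp [ball]
  | succ j ih =>
    ext w
    obtain ⟨w, rfl⟩ := π.surjective w
    simp only [ball, mem_filter, mem_univ, true_and, ih, mem_map_equiv]
    rw [π.surjective.exists]
    simp only [Equiv.symm_apply_apply, mem_permE_apply]

lemma ball_subset_ball_succ (j : ℕ) : ball E r j ⊆ ball E r (j + 1) := fun _ hv => by
  simp [ball, hv]

lemma root_mem_ball (j : ℕ) : r ∈ ball E r j := by
  induction j with
  | zero => simp [ball]
  | succ j ih => exact ball_subset_ball_succ E r j ih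

lemma mem_ball_succ_of_edge {j : ℕ} {u w : V} (hu : u ∈ ball E r j) (hw : (u, w) ∈ E) :
    w ∈ ball E r (j + 1) := by
  simp only [ball, mem_filter, mem_univ, true_and]
  exact Or.inr ⟨u, hu, hw⟩

end Graph

section Logits

variable [Fintype V] [DecidableEq V] (E : Finset (V × V)) (r : V) (c : ℕ)

lemma lamc_permE (π : Equiv.Perm V) : lamc (permE π E) (π r) c = lamc E r c := by
  simp only [lamc, ball_permE, card_map]

lemma xi_permE_apply (π : Equiv.Perm V) (μ : V → ℝ) (w : V) :
    xi (permE π E) (π r) c μ (π w) = xi E r c (μ ∘ π) w := by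
  simp only [xi, lamc_permE, ball_permE, filter_map, sum_map, mem_map_equiv,
    Equiv.symm_apply_apply]
  simp [mem_permE_apply]

lemma bfsLoss_permE (π : Equiv.Perm V) (μ : V → ℝ) :
    bfsLoss (permE π E) (π r) c μ = bfsLoss E r c (μ ∘ π) := by
  rw [bfsLoss, bfsLoss, ← Equiv.sum_comp π]
  simp only [ball_permE, sum_map, Equiv.coe_toEmbedding, xi_permE_apply]

lemma xi_eq_zero_of_notMem_ball_succ (μ : V → ℝ) {w : V} (hw : w ∉ ball E r (c + 1)) :
    xi E r c μ w = 0 := by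
  have hw_c : w ∉ ball E r c := fun h => hw (ball_subset_ball_succ E r c h)
  have hno_edge : (ball E r c).filter (fun u => (u, w) ∈ E) = ∅ :=
    filter_eq_empty_iff.2 fun _ hu huw => hw (mem_ball_succ_of_edge E r hu huw)
  simp [xi, hw_c, hno_edge]

lemma sum_exp_xi_eq_sum_ball_add (μ : V → ℝ) :
    ∑ w, Real.exp (xi E r c μ w)
      = ∑ w ∈ ball E r (c + 1), Real.exp (xi E r c μ w)
        + ((Fintype.card V : ℝ) - ((ball E r (c + 1)).card : ℝ)) := by
  rw [← sum_compl_add_sum (ball E r (c + 1)), add_comm]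
  congr 1
  have hexp_one : ∀ w ∈ (ball E r (c + 1))ᶜ, Real.exp (xi E r c μ w) = 1 := fun w hw => by
    rw [xi_eq_zero_of_notMem_ball_succ E r c μ (mem_compl.1 hw), Real.exp_zero]
  rw [sum_congr rfl hexp_one, sum_const, card_compl, nsmul_one, Nat.cast_sub (card_le_univ _)]

lemma hasDerivAt_xi_update (μ : V → ℝ) (u w : V) (x : ℝ) :
    HasDerivAt (fun y => xi E r c (Function.update μ u y) w)
      (lamc E r c * if u ∈ (ball E r c).filter (fun u' => (u', w) ∈ E) then 1 else 0) x := by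
  have hsum := HasDerivAt.fun_sum (u := (ball E r c).filter (fun u' => (u', w) ∈ E))
    fun u' _ => hasDerivAt_pi.1 (hasDerivAt_update μ u x) u'
  rw [sum_pi_single'] at hsum
  exact (hsum.const_mul _).const_add _

end Logits

section Loss

variable [Fintype V] [DecidableEq V] (E : Finset (V × V)) (r : V) (c : ℕ)

lemma hasDerivAt_bfsLoss_update (μ : V → ℝ) (u : V) :
    HasDerivAt (fun x => bfsLoss E r c (Function.update μ u x))
      ((∑ w, Real.exp (xi E r c μ w)
          * (lamc E r c * if u ∈ (ball E r c).filter (fun u' => (u', w) ∈ E) then 1 else 0))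
        * ((∑ w, Real.exp (xi E r c μ w))⁻¹
          - (∑ w ∈ ball E r (c + 1), Real.exp (xi E r c μ w))⁻¹)) (μ u) := by
  have h := hasDerivAt_neg_log_sum_exp_div_sum_exp ⟨r, root_mem_ball E r (c + 1)⟩
    (fun w => hasDerivAt_xi_update E r c μ u w (μ u)) fun w hw => by
      rw [if_neg fun hu => hw (mem_ball_succ_of_edge E r (mem_filter.1 hu).1
        (mem_filter.1 hu).2), mul_zero]
  rwa [Function.update_eq_self] at h

lemma sum_perm_sum_exp_xi_mul_ite (μ : V → ℝ) (v : V) :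
    ∑ π : Equiv.Perm V, ∑ w, Real.exp (xi E r c μ w)
        * (lamc E r c * if π.symm v ∈ (ball E r c).filter (fun u' => (u', w) ∈ E) then 1 else 0)
      = (Fintype.card V - 1).factorial * lamc E r c
        * ∑ w, (degc E r c w : ℝ) * Real.exp (xi E r c μ w) := by
  rw [sum_comm, mul_sum]
  refine sum_congr rfl fun w _ => ?_
  rw [← mul_sum, ← mul_sum, sum_perm_ite_symm_apply_mem, degc]
  ring

end Loss

/-- gradient of the permutation-averaged BFS loss when all coordinates
of μ are equal; the value is independent of the coordinate v. -/
theorem stmt3 {V : Type*} [Fintype V] [DecidableEq V]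
    (E : Finset (V × V)) (r : V) (c : ℕ)
    (μ : V → ℝ) (μbar : ℝ) (hμ : ∀ u : V, μ u = μbar) :
    ∀ v : V,
      HasDerivAt (fun x => avgBfsLoss E r c (Function.update μ v x))
        (-((∑ w ∈ ball E r (c + 1), Real.exp (xi E r c μ w))⁻¹
              / ((Fintype.card V : ℝ) * Real.sqrt ((ball E r c).card : ℝ)))
          * (((Fintype.card V : ℝ) - ((ball E r (c + 1)).card : ℝ))
              / ((∑ w ∈ ball E r (c + 1), Real.exp (xi E r c μ w))
                  + ((Fintype.card V : ℝ) - ((ball E r (c + 1)).card : ℝ))))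
          * (∑ u : V, (degc E r c u : ℝ) * Real.exp (xi E r c μ u)))
        (μ v) := by
  intro v
  have hμπ : ∀ π : Equiv.Perm V, μ ∘ π = μ := fun π => funext fun u => by simp [hμ]
  have hpermuted : ∀ (π : Equiv.Perm V) x, bfsLoss (permE π E) (π r) c (Function.update μ v x)
      = bfsLoss E r c (Function.update μ (π.symm v) x) := fun π x => by
    rw [bfsLoss_permE, Function.update_comp_equiv, hμπ]
  simp only [avgBfsLoss, hpermuted]
  rw [hμ v]
  refine ((HasDerivAt.fun_sum fun π _ =>
    hμ (π.symm v) ▸ hasDerivAt_bfsLoss_update E r c μ (π.symm v)).const_mul _).congr_deriv ?_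
  rw [← sum_mul, sum_perm_sum_exp_xi_mul_ite, sum_exp_xi_eq_sum_ball_add, lamc]
  have hS_ball : 0 < ∑ w ∈ ball E r (c + 1), Real.exp (xi E r c μ w) :=
    sum_pos (fun _ _ => Real.exp_pos _) ⟨r, root_mem_ball E r (c + 1)⟩
  have hS_total : 0 < ∑ w ∈ ball E r (c + 1), Real.exp (xi E r c μ w)
      + ((Fintype.card V : ℝ) - ((ball E r (c + 1)).card : ℝ)) :=
    sum_exp_xi_eq_sum_ball_add E r c μ ▸ sum_pos (fun _ _ => Real.exp_pos _) ⟨r, mem_univ r⟩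
  have hK : 0 < Real.sqrt ((ball E r c).card : ℝ) :=
    Real.sqrt_pos.2 (Nat.cast_pos.2 (card_pos.2 ⟨r, root_mem_ball E r c⟩))
  rw [← Nat.mul_factorial_pred (Fintype.card_pos_iff.2 ⟨v⟩).ne', Nat.cast_mul]
  field_simp
  ring
end

section
/- Assume c0 ≥ 1, d_max ≥ 1, and let d* be an integer with 1 ≤ d* < d_max. Let α > 0 and let μ : [0, ∞) → ℝ be differentiable with μ(0) = 0 and μ'(t) = (α/(n√K))·(d* − F(μ(t))) for all t ≥ 0. Then: (i) there exists a unique μ* ∈ ℝ with F(μ*) = d*; (ii) μ(t) converges monotonically to μ* as t → ∞ (non-decreasing if F(0) ≤ d*, non-increasing if F(0) > d*); and (iii) there exist constants γ > 0 and C ≥ 0 such that |μ(t) − μ*| ≤ C·e^{−γ t} for all t ≥ 0. -/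
open Finset Filter Matrix

variable {V : Type*}

/-!
`F` is the mean of the in-degrees `d_u` under the weights `exp (λ (1{u ∈ N_c} + μ d_u))` on
`N_{c+1}` plus a mass `c0` carrying the value `0`. Its derivative is `λ` times a variance, which is
positive thanks to that extra mass, and `F` increases from `0` at `-∞` to `d_max` at `+∞`; so
`F = d*` has exactly one root `μ*`.

Along `μ' = k (d* - F μ)` the squared distance `(μ - μ*)²` is non-increasing because `F` is
increasing. Hence the trajectory stays in a compact interval, on which `F' ≥ m > 0`, and then
`(μ - μ*)² e^{2kmt}` is non-increasing too, which is the exponential rate. The same Lyapunov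
function shows that a trajectory reaching `μ*` stays there, so it never crosses `μ*` and is
monotone.
-/

open Set Real Topology

lemma monotoneOn_Ici_of_hasDerivWithinAt_nonneg {f f' : ℝ → ℝ} {a : ℝ}
    (hf : ∀ t ∈ Ici a, HasDerivWithinAt f (f' t) (Ici a) t) (hf' : ∀ t ∈ Ici a, 0 ≤ f' t) :
    MonotoneOn f (Ici a) := by
  refine monotoneOn_of_hasDerivWithinAt_nonneg (convex_Ici a)
    (fun t ht => (hf t ht).continuousWithinAt) (fun t ht => ?_)
    fun t ht => hf' t (interior_subset ht)
  rw [interior_Ici] at ht ⊢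
  exact (hf t (mem_Ici_of_Ioi ht)).mono Ioi_subset_Ici_self

lemma antitoneOn_Ici_of_hasDerivWithinAt_nonpos {f f' : ℝ → ℝ} {a : ℝ}
    (hf : ∀ t ∈ Ici a, HasDerivWithinAt f (f' t) (Ici a) t) (hf' : ∀ t ∈ Ici a, f' t ≤ 0) :
    AntitoneOn f (Ici a) := by
  refine antitoneOn_of_hasDerivWithinAt_nonpos (convex_Ici a)
    (fun t ht => (hf t ht).continuousWithinAt) (fun t ht => ?_)
    fun t ht => hf' t (interior_subset ht)
  rw [interior_Ici] at ht ⊢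
  exact (hf t (mem_Ici_of_Ioi ht)).mono Ioi_subset_Ici_self

lemma tendsto_of_abs_sub_le_mul_exp {f : ℝ → ℝ} {x C γ : ℝ} (hγ : 0 < γ)
    (hf : ∀ t ∈ Ici (0 : ℝ), |f t - x| ≤ C * exp (-γ * t)) :
    Tendsto f atTop (𝓝 x) := by
  rw [tendsto_iff_norm_sub_tendsto_zero]
  refine squeeze_zero' (Eventually.of_forall fun t => norm_nonneg _)
    ((eventually_ge_atTop 0).mono hf) ?_
  simpa using (tendsto_exp_atBot.comp
    (tendsto_id.const_mul_atTop_of_neg (neg_neg_of_pos hγ))).const_mul C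

lemma exists_pos_mul_sq_le_of_deriv_pos {G : ℝ → ℝ} (hG : ContDiff ℝ 1 G)
    (hG' : ∀ x, 0 < deriv G x) {a b x₀ : ℝ} (hx₀ : x₀ ∈ Icc a b) :
    ∃ m > 0, ∀ x ∈ Icc a b, m * (x - x₀) ^ 2 ≤ (x - x₀) * (G x - G x₀) := by
  obtain ⟨x₁, -, hmin⟩ :=
    isCompact_Icc.exists_isMinOn ⟨x₀, hx₀⟩ (hG.continuous_deriv le_rfl).continuousOn
  have hslope := (convex_Icc a b).mul_sub_le_image_sub_of_le_deriv hG.continuous.continuousOn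
    (hG.differentiable one_ne_zero).differentiableOn fun x hx => hmin (interior_subset hx)
  refine ⟨deriv G x₁, hG' x₁, fun x hx => ?_⟩
  rcases le_total x x₀ with h | h
  · nlinarith [hslope x hx x₀ hx₀ h]
  · nlinarith [hslope x₀ hx₀ x hx h]

section ODE

variable {G : ℝ → ℝ} {k d x₀ : ℝ} {μ : ℝ → ℝ}

lemma antitoneOn_sq_sub_mul_exp_of_ode {m : ℝ} (hk : 0 ≤ k) (hx₀ : G x₀ = d)
    (hm : ∀ t ∈ Ici (0 : ℝ), m * (μ t - x₀) ^ 2 ≤ (μ t - x₀) * (G (μ t) - G x₀))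
    (hode : ∀ t ∈ Ici (0 : ℝ), HasDerivWithinAt μ (k * (d - G (μ t))) (Ici 0) t) :
    AntitoneOn (fun t => (μ t - x₀) ^ 2 * exp (2 * k * m * t)) (Ici 0) := by
  subst hx₀
  refine antitoneOn_Ici_of_hasDerivWithinAt_nonpos
    (f' := fun t => -2 * k * ((μ t - x₀) * (G (μ t) - G x₀) - m * (μ t - x₀) ^ 2)
      * exp (2 * k * m * t)) (fun t ht => ?_) fun t ht => ?_
  · refine ((((hode t ht).sub_const x₀).fun_pow 2).fun_mul
      ((hasDerivAt_id' t).const_mul (2 * k * m)).exp.hasDerivWithinAt).congr_deriv ?_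
    norm_num
    ring
  · have hgap := sub_nonneg.2 (hm t ht)
    nlinarith [mul_nonneg (mul_nonneg hk hgap) (exp_pos (2 * k * m * t)).le]

lemma abs_sub_le_mul_exp_of_ode {m : ℝ} (hk : 0 ≤ k) (hx₀ : G x₀ = d)
    (hm : ∀ t ∈ Ici (0 : ℝ), m * (μ t - x₀) ^ 2 ≤ (μ t - x₀) * (G (μ t) - G x₀))
    (hode : ∀ t ∈ Ici (0 : ℝ), HasDerivWithinAt μ (k * (d - G (μ t))) (Ici 0) t) :
    ∀ t ∈ Ici (0 : ℝ), |μ t - x₀| ≤ |μ 0 - x₀| * exp (-(k * m) * t) := by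
  intro t ht
  have h := antitoneOn_sq_sub_mul_exp_of_ode hk hx₀ hm hode self_mem_Ici ht ht
  have hexp : exp (-(k * m) * t) ^ 2 * exp (2 * k * m * t) = 1 := by
    rw [sq, ← exp_add, ← exp_add, show -(k * m) * t + -(k * m) * t + 2 * k * m * t = 0 by ring,
      exp_zero]
  have hsq : |μ t - x₀| ^ 2 ≤ (|μ 0 - x₀| * exp (-(k * m) * t)) ^ 2 := by
    rw [sq_abs, mul_pow, sq_abs]
    calc (μ t - x₀) ^ 2 = (μ t - x₀) ^ 2 * exp (2 * k * m * t) * exp (-(k * m) * t) ^ 2 := by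
          rw [mul_assoc, mul_comm (exp _), hexp, mul_one]
      _ ≤ (μ 0 - x₀) ^ 2 * exp (-(k * m) * t) ^ 2 := by
          gcongr
          simpa using h
  exact (pow_le_pow_iff_left₀ (abs_nonneg _) (by positivity) two_ne_zero).1 hsq

lemma antitoneOn_sq_sub_of_ode (hG : Monotone G) (hk : 0 ≤ k) (hx₀ : G x₀ = d)
    (hode : ∀ t ∈ Ici (0 : ℝ), HasDerivWithinAt μ (k * (d - G (μ t))) (Ici 0) t) :
    AntitoneOn (fun t => (μ t - x₀) ^ 2) (Ici 0) := by
  simpa using antitoneOn_sq_sub_mul_exp_of_ode (m := 0) hk hx₀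
    (fun t _ => by simpa using (monotone_id.monovary hG).sub_mul_sub_nonneg x₀ (μ t)) hode

lemma eq_of_ode_of_eq (hG : Monotone G) (hk : 0 ≤ k) (hx₀ : G x₀ = d)
    (hode : ∀ t ∈ Ici (0 : ℝ), HasDerivWithinAt μ (k * (d - G (μ t))) (Ici 0) t)
    {s t : ℝ} (hs : 0 ≤ s) (hst : s ≤ t) (hμs : μ s = x₀) : μ t = x₀ := by
  simpa [hμs, sub_eq_zero] using antitoneOn_sq_sub_of_ode hG hk hx₀ hode hs (hs.trans hst) hst

lemma le_of_ode_of_le (hG : Monotone G) (hk : 0 ≤ k) (hx₀ : G x₀ = d)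
    (hode : ∀ t ∈ Ici (0 : ℝ), HasDerivWithinAt μ (k * (d - G (μ t))) (Ici 0) t)
    (h0 : μ 0 ≤ x₀) : ∀ t ∈ Ici (0 : ℝ), μ t ≤ x₀ := by
  intro t ht
  by_contra! hlt
  obtain ⟨s, hs, hμs⟩ := intermediate_value_Icc ht
    (fun s hs => (hode s hs.1).continuousWithinAt.mono Icc_subset_Ici_self) ⟨h0, hlt.le⟩
  exact hlt.ne' (eq_of_ode_of_eq hG hk hx₀ hode hs.1 hs.2 hμs)

lemma ge_of_ode_of_ge (hG : Monotone G) (hk : 0 ≤ k) (hx₀ : G x₀ = d)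
    (hode : ∀ t ∈ Ici (0 : ℝ), HasDerivWithinAt μ (k * (d - G (μ t))) (Ici 0) t)
    (h0 : x₀ ≤ μ 0) : ∀ t ∈ Ici (0 : ℝ), x₀ ≤ μ t := by
  intro t ht
  by_contra! hlt
  obtain ⟨s, hs, hμs⟩ := intermediate_value_Icc' ht
    (fun s hs => (hode s hs.1).continuousWithinAt.mono Icc_subset_Ici_self) ⟨hlt.le, h0⟩
  exact hlt.ne (eq_of_ode_of_eq hG hk hx₀ hode hs.1 hs.2 hμs)

lemma monotoneOn_of_ode (hG : Monotone G) (hk : 0 ≤ k) (hx₀ : G x₀ = d)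
    (hode : ∀ t ∈ Ici (0 : ℝ), HasDerivWithinAt μ (k * (d - G (μ t))) (Ici 0) t)
    (h0 : μ 0 ≤ x₀) : MonotoneOn μ (Ici 0) :=
  monotoneOn_Ici_of_hasDerivWithinAt_nonneg hode fun t ht =>
    mul_nonneg hk (sub_nonneg.2 (hx₀ ▸ hG (le_of_ode_of_le hG hk hx₀ hode h0 t ht)))

lemma antitoneOn_of_ode (hG : Monotone G) (hk : 0 ≤ k) (hx₀ : G x₀ = d)
    (hode : ∀ t ∈ Ici (0 : ℝ), HasDerivWithinAt μ (k * (d - G (μ t))) (Ici 0) t)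
    (h0 : x₀ ≤ μ 0) : AntitoneOn μ (Ici 0) :=
  antitoneOn_Ici_of_hasDerivWithinAt_nonpos hode fun t ht =>
    mul_nonpos_of_nonneg_of_nonpos hk
      (sub_nonpos.2 (hx₀ ▸ hG (ge_of_ode_of_ge hG hk hx₀ hode h0 t ht)))

lemma exists_abs_sub_le_mul_exp_of_ode (hG : ContDiff ℝ 1 G) (hG' : ∀ x, 0 < deriv G x)
    (hk : 0 < k) (hx₀ : G x₀ = d)
    (hode : ∀ t ∈ Ici (0 : ℝ), HasDerivWithinAt μ (k * (d - G (μ t))) (Ici 0) t) :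
    ∃ γ, 0 < γ ∧ ∃ C, 0 ≤ C ∧ ∀ t ∈ Ici (0 : ℝ), |μ t - x₀| ≤ C * exp (-γ * t) := by
  set C := |μ 0 - x₀|
  have hC : 0 ≤ C := abs_nonneg _
  have hbdd : ∀ t ∈ Ici (0 : ℝ), μ t ∈ Icc (x₀ - C) (x₀ + C) := fun t ht => by
    have h := sq_le_sq.1 (antitoneOn_sq_sub_of_ode (strictMono_of_deriv_pos hG').monotone hk.le
      hx₀ hode self_mem_Ici ht ht)
    constructor <;> linarith [abs_le.1 h]
  obtain ⟨m, hm, hstrong⟩ := exists_pos_mul_sq_le_of_deriv_pos hG hG'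
    (show x₀ ∈ Icc (x₀ - C) (x₀ + C) from ⟨by linarith [hC], by linarith [hC]⟩)
  exact ⟨k * m, mul_pos hk hm, C, hC,
    abs_sub_le_mul_exp_of_ode hk.le hx₀ (fun t ht => hstrong _ (hbdd t ht)) hode⟩

end ODE

section TiltedMean

variable {ι : Type*} (s : Finset ι) (a d : ι → ℝ) (β c₀ : ℝ)

noncomputable def tiltedMoment (n : ℕ) (y : ℝ) : ℝ :=
  ∑ i ∈ s, d i ^ n * exp (β * (a i + y * d i))

/-- The mean of `d` under the weights `exp (β (a i + y d i))` on `s` together with an extra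
mass `c₀` on which `d` vanishes. -/
noncomputable def tiltedMean (y : ℝ) : ℝ :=
  tiltedMoment s a d β 1 y / (tiltedMoment s a d β 0 y + c₀)

lemma hasDerivAt_tiltedMoment (n : ℕ) (y : ℝ) :
    HasDerivAt (tiltedMoment s a d β n) (β * tiltedMoment s a d β (n + 1) y) y := by
  rw [tiltedMoment, Finset.mul_sum]
  refine HasDerivAt.fun_sum fun i _ => ?_
  refine ((((hasDerivAt_id' y).mul_const (d i)).const_add (a i)).const_mul β).exp.const_mul _
    |>.congr_deriv ?_
  ring

lemma contDiff_tiltedMoment (k : WithTop ℕ∞) (n : ℕ) : ContDiff ℝ k (tiltedMoment s a d β n) :=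
  ContDiff.sum fun _ _ => contDiff_const.mul <| contDiff_exp.comp <|
    contDiff_const.mul <| contDiff_const.add <| contDiff_id.mul contDiff_const

lemma tiltedMoment_zero_nonneg (y : ℝ) : 0 ≤ tiltedMoment s a d β 0 y :=
  Finset.sum_nonneg fun i _ => by positivity

lemma tiltedMoment_two_pos {i₀ : ι} (hi₀ : i₀ ∈ s) (hd : d i₀ ≠ 0) (y : ℝ) :
    0 < tiltedMoment s a d β 2 y :=
  Finset.sum_pos' (fun _ _ => by positivity) ⟨i₀, hi₀, by positivity⟩

lemma sq_tiltedMoment_one_le (y : ℝ) :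
    tiltedMoment s a d β 1 y ^ 2 ≤ tiltedMoment s a d β 2 y * tiltedMoment s a d β 0 y :=
  Finset.sum_sq_le_sum_mul_sum_of_sq_le_mul s (fun _ _ => by positivity) (fun _ _ => by positivity)
    fun _ _ => le_of_eq (by ring)

variable {c₀}

lemma hasDerivAt_tiltedMean (hc₀ : 0 < c₀) (y : ℝ) :
    HasDerivAt (tiltedMean s a d β c₀)
      (β * (tiltedMoment s a d β 2 y * (tiltedMoment s a d β 0 y + c₀)
        - tiltedMoment s a d β 1 y ^ 2) / (tiltedMoment s a d β 0 y + c₀) ^ 2) y := by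
  refine ((hasDerivAt_tiltedMoment s a d β 1 y).div
    ((hasDerivAt_tiltedMoment s a d β 0 y).add_const c₀) ?_).congr_deriv (by ring)
  linarith [tiltedMoment_zero_nonneg s a d β y]

lemma contDiff_tiltedMean (hc₀ : 0 < c₀) (k : WithTop ℕ∞) :
    ContDiff ℝ k (tiltedMean s a d β c₀) :=
  (contDiff_tiltedMoment s a d β k 1).div ((contDiff_tiltedMoment s a d β k 0).add contDiff_const)
    fun y => by linarith [tiltedMoment_zero_nonneg s a d β y]

/-- The derivative is `β` times the variance of `d`, which is positive thanks to the mass `c₀`. -/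
lemma deriv_tiltedMean_pos (hβ : 0 < β) (hc₀ : 0 < c₀) {i₀ : ι} (hi₀ : i₀ ∈ s)
    (hd : d i₀ ≠ 0) (y : ℝ) : 0 < deriv (tiltedMean s a d β c₀) y := by
  rw [(hasDerivAt_tiltedMean s a d β hc₀ y).deriv]
  have hcs := sq_tiltedMoment_one_le s a d β y
  have h2 := tiltedMoment_two_pos s a d β hi₀ hd y
  have h0 := tiltedMoment_zero_nonneg s a d β y
  have : 0 < tiltedMoment s a d β 2 y * (tiltedMoment s a d β 0 y + c₀)
      - tiltedMoment s a d β 1 y ^ 2 := by nlinarith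
  positivity

lemma tendsto_tiltedMean_atBot (hβ : 0 < β) (hc₀ : 0 < c₀) (hd : ∀ i ∈ s, 0 ≤ d i) :
    Tendsto (tiltedMean s a d β c₀) atBot (𝓝 0) := by
  have hM₁ : Tendsto (tiltedMoment s a d β 1) atBot (𝓝 0) := by
    rw [← Finset.sum_const_zero (s := s)]
    refine tendsto_finsetSum s fun i hi => ?_
    rcases (hd i hi).eq_or_lt with h | h
    · simp [← h]
    · simpa using (tendsto_exp_atBot.comp <| (tendsto_atBot_add_const_left _ (a i)
        (tendsto_id.atBot_mul_const h)).const_mul_atBot hβ).const_mul (d i)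
  have hM₁_nonneg : ∀ y, 0 ≤ tiltedMoment s a d β 1 y := fun y =>
    Finset.sum_nonneg fun i hi => mul_nonneg (by simpa using hd i hi) (exp_pos _).le
  refine squeeze_zero (fun y => div_nonneg (hM₁_nonneg y) ?_) (fun y => ?_)
    (by simpa using hM₁.div_const c₀)
  · linarith [tiltedMoment_zero_nonneg s a d β y]
  · exact div_le_div_of_nonneg_left (hM₁_nonneg y) hc₀
      (le_add_of_nonneg_left (tiltedMoment_zero_nonneg s a d β y))

lemma tendsto_tiltedMean_atTop (hβ : 0 < β) {i₀ : ι} (hi₀ : i₀ ∈ s)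
    (hmax : ∀ i ∈ s, d i ≤ d i₀) (hpos : 0 < d i₀) :
    Tendsto (tiltedMean s a d β c₀) atTop (𝓝 (d i₀)) := by
  set g : ι → ℝ → ℝ := fun i y => exp (β * (a i + y * (d i - d i₀)))
  set ℓ : ι → ℝ := fun i => if d i = d i₀ then exp (β * a i) else 0
  have hg : ∀ i ∈ s, Tendsto (g i) atTop (𝓝 (ℓ i)) := fun i hi => by
    rcases (hmax i hi).lt_or_eq with h | h
    · simp only [ℓ, if_neg h.ne]
      exact tendsto_exp_atBot.comp <| (tendsto_atBot_add_const_left _ (a i)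
        (tendsto_id.atTop_mul_const_of_neg (sub_neg.2 h))).const_mul_atBot hβ
    · simp [g, ℓ, h]
  have hrescale : ∀ y, tiltedMean s a d β c₀ y =
      (∑ i ∈ s, d i * g i y) / (∑ i ∈ s, g i y + c₀ * exp (-(β * d i₀) * y)) := fun y => by
    rw [tiltedMean, ← mul_div_mul_right _ _ (exp_ne_zero (-(β * d i₀) * y)), tiltedMoment,
      tiltedMoment, Finset.sum_mul, add_mul, Finset.sum_mul]
    congr 1
    · refine Finset.sum_congr rfl fun i _ => ?_
      rw [pow_one, mul_assoc, ← exp_add]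
      exact congrArg (d i * exp ·) (by ring)
    · congr 1
      refine Finset.sum_congr rfl fun i _ => ?_
      rw [pow_zero, one_mul, ← exp_add]
      exact congrArg exp (by ring)
  have hℓ : 0 < ∑ i ∈ s, ℓ i :=
    Finset.sum_pos' (fun i _ => by positivity) ⟨i₀, hi₀, by simp [ℓ, exp_pos]⟩
  have hdℓ : ∑ i ∈ s, d i * ℓ i = d i₀ * ∑ i ∈ s, ℓ i := by
    rw [Finset.mul_sum]
    exact Finset.sum_congr rfl fun i _ => by by_cases h : d i = d i₀ <;> simp [ℓ, h]
  have hlim := (tendsto_finsetSum s fun i hi => (hg i hi).const_mul (d i)).div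
    ((tendsto_finsetSum s hg).add ((tendsto_exp_atBot.comp
      (tendsto_id.const_mul_atTop_of_neg (neg_neg_of_pos (mul_pos hβ hpos)))).const_mul c₀))
    (by simpa using hℓ.ne')
  rw [mul_zero, add_zero, hdℓ, mul_div_assoc, div_self hℓ.ne', mul_one] at hlim
  exact hlim.congr fun y => (hrescale y).symm

lemma exists_tiltedMean_eq (hβ : 0 < β) (hc₀ : 0 < c₀) (hd : ∀ i ∈ s, 0 ≤ d i) {i₀ : ι}
    (hi₀ : i₀ ∈ s) (hmax : ∀ i ∈ s, d i ≤ d i₀) {v : ℝ} (hv : 0 < v) (hvmax : v < d i₀) :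
    ∃ y, tiltedMean s a d β c₀ y = v :=
  mem_range_of_exists_le_of_exists_ge (contDiff_tiltedMean s a d β hc₀ 0).continuous
    (((tendsto_tiltedMean_atBot s a d β hβ hc₀ hd).eventually (gt_mem_nhds hv)).exists.imp
      fun _ => le_of_lt)
    (((tendsto_tiltedMean_atTop s a d β hβ hi₀ hmax (hv.trans hvmax)).eventually
      (lt_mem_nhds hvmax)).exists.imp fun _ => le_of_lt)

end TiltedMean

section Graph

variable [Fintype V] [DecidableEq V] (E : Finset (V × V)) (r : V) (c : ℕ)

lemma mem_ball_self : ∀ j, r ∈ ball E r j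
  | 0 => Finset.mem_singleton_self r
  | j + 1 => Finset.mem_filter.2 ⟨Finset.mem_univ r, Or.inl (mem_ball_self j)⟩

lemma lamc_pos : 0 < lamc E r c := by
  have : 0 < (ball E r c).card := Finset.card_pos.2 ⟨r, mem_ball_self E r c⟩
  unfold lamc
  positivity

lemma mem_ball_succ_of_degc_pos {v : V} (hv : 0 < degc E r c v) : v ∈ ball E r (c + 1) := by
  obtain ⟨u, hu⟩ := Finset.card_pos.1 hv
  rw [Finset.mem_filter] at hu
  exact Finset.mem_filter.2 ⟨Finset.mem_univ v, Or.inr ⟨u, hu.1, hu.2⟩⟩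

lemma exists_mem_ball_degc_eq_sup (h : 0 < Finset.univ.sup (degc E r c)) :
    ∃ v ∈ ball E r (c + 1), degc E r c v = Finset.univ.sup (degc E r c) := by
  obtain ⟨v, -, hv⟩ := Finset.exists_mem_eq_sup Finset.univ ⟨r, Finset.mem_univ r⟩ (degc E r c)
  exact ⟨v, mem_ball_succ_of_degc_pos E r c (hv ▸ h), hv.symm⟩

lemma card_sub_card_ball_pos (hc0 : (ball E r (c + 1)).card + 1 ≤ Fintype.card V) :
    (0 : ℝ) < Fintype.card V - (ball E r (c + 1)).card := by
  rw [sub_pos]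
  exact_mod_cast hc0

lemma Fc_eq_tiltedMean : Fc E r c = tiltedMean (ball E r (c + 1))
    (fun u => if u ∈ ball E r c then 1 else 0) (fun u => (degc E r c u : ℝ)) (lamc E r c)
    ((Fintype.card V : ℝ) - ((ball E r (c + 1)).card : ℝ)) := by
  ext x
  simp [Fc, tiltedMean, tiltedMoment]

lemma contDiff_Fc (hc0 : (ball E r (c + 1)).card + 1 ≤ Fintype.card V) (k : WithTop ℕ∞) :
    ContDiff ℝ k (Fc E r c) := by
  rw [Fc_eq_tiltedMean]
  exact contDiff_tiltedMean _ _ _ _ (card_sub_card_ball_pos E r c hc0) k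

lemma deriv_Fc_pos (hc0 : (ball E r (c + 1)).card + 1 ≤ Fintype.card V)
    (hdmax : 0 < Finset.univ.sup (degc E r c)) (x : ℝ) : 0 < deriv (Fc E r c) x := by
  obtain ⟨v, hv, hvmax⟩ := exists_mem_ball_degc_eq_sup E r c hdmax
  rw [Fc_eq_tiltedMean]
  exact deriv_tiltedMean_pos _ _ _ _ (lamc_pos E r c) (card_sub_card_ball_pos E r c hc0) hv
    (by rw [hvmax]; exact_mod_cast hdmax.ne') x

lemma exists_Fc_eq (hc0 : (ball E r (c + 1)).card + 1 ≤ Fintype.card V) {v : ℝ} (hv : 0 < v)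
    (hvmax : v < Finset.univ.sup (degc E r c)) : ∃ x, Fc E r c x = v := by
  obtain ⟨u₀, hu₀, hu₀max⟩ := exists_mem_ball_degc_eq_sup E r c (by exact_mod_cast hv.trans hvmax)
  rw [Fc_eq_tiltedMean]
  refine exists_tiltedMean_eq _ _ _ _ (lamc_pos E r c) (card_sub_card_ball_pos E r c hc0)
    (fun _ _ => Nat.cast_nonneg _) hu₀ (fun u _ => ?_) hv (by rwa [hu₀max])
  exact_mod_cast hu₀max ▸ Finset.le_sup (Finset.mem_univ u)

end Graph

theorem stmt9_general {V : Type*} [Fintype V] [DecidableEq V]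
    (E : Finset (V × V)) (r : V) (c : ℕ)
    (hc0 : (ball E r (c + 1)).card + 1 ≤ Fintype.card V)
    (dstar : ℕ) (hd1 : 1 ≤ dstar) (hd2 : dstar < Finset.univ.sup (degc E r c))
    (α : ℝ) (hα : 0 < α)
    (μ : ℝ → ℝ) (hinit : μ 0 = 0)
    (hode : ∀ t ∈ Set.Ici (0 : ℝ),
      HasDerivWithinAt μ
        ((α / ((Fintype.card V : ℝ) * Real.sqrt ((ball E r c).card : ℝ)))
          * ((dstar : ℝ) - Fc E r c (μ t)))
        (Set.Ici (0 : ℝ)) t) :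
    ∃ μstar : ℝ,
      Fc E r c μstar = (dstar : ℝ)
      ∧ (∀ y : ℝ, Fc E r c y = (dstar : ℝ) → y = μstar)
      ∧ Filter.Tendsto μ Filter.atTop (nhds μstar)
      ∧ (Fc E r c 0 ≤ (dstar : ℝ) → MonotoneOn μ (Set.Ici (0 : ℝ)))
      ∧ ((dstar : ℝ) < Fc E r c 0 → AntitoneOn μ (Set.Ici (0 : ℝ)))
      ∧ ∃ γ : ℝ, 0 < γ ∧ ∃ C : ℝ, 0 ≤ C ∧
          ∀ t ∈ Set.Ici (0 : ℝ), |μ t - μstar| ≤ C * Real.exp (-γ * t) := by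
  have hF' := deriv_Fc_pos E r c hc0 (by omega)
  have hFmono := strictMono_of_deriv_pos hF'
  obtain ⟨μstar, hμstar⟩ := exists_Fc_eq E r c hc0 (v := dstar) (by exact_mod_cast hd1)
    (by exact_mod_cast hd2)
  have hk : 0 < α / ((Fintype.card V : ℝ) * Real.sqrt ((ball E r c).card : ℝ)) := by
    have : 0 < (ball E r c).card := Finset.card_pos.2 ⟨r, mem_ball_self E r c⟩
    have : 0 < Fintype.card V := Fintype.card_pos_iff.2 ⟨r⟩
    positivity
  obtain ⟨γ, hγ, C, hC, hbound⟩ :=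
    exists_abs_sub_le_mul_exp_of_ode (contDiff_Fc E r c hc0 1) hF' hk hμstar hode
  refine ⟨μstar, hμstar, fun y hy => hFmono.injective (hy.trans hμstar.symm),
    tendsto_of_abs_sub_le_mul_exp hγ hbound, fun h0 => ?_, fun h0 => ?_, γ, hγ, C, hC, hbound⟩
  · exact monotoneOn_of_ode hFmono.monotone hk.le hμstar hode
      (by rwa [hinit, ← hFmono.le_iff_le, hμstar])
  · exact antitoneOn_of_ode hFmono.monotone hk.le hμstar hode
      (by rw [hinit, ← hFmono.le_iff_le, hμstar]; exact h0.le)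

/-- when 1 ≤ d* < d_max, the ODE μ' = (α/(n√K))·(d* − F(μ)) started at 0
has a unique finite fixed point μ* with F(μ*) = d*, converges monotonically to it, and
the convergence is exponentially fast. -/
theorem stmt9 {V : Type*} [Fintype V] [DecidableEq V]
    (E : Finset (V × V)) (r : V) (c : ℕ)
    (hc0 : (ball E r (c + 1)).card + 1 ≤ Fintype.card V)
    (hdmax : 1 ≤ Finset.univ.sup (degc E r c))
    (dstar : ℕ) (hd1 : 1 ≤ dstar) (hd2 : dstar < Finset.univ.sup (degc E r c))
    (α : ℝ) (hα : 0 < α)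
    (μ : ℝ → ℝ) (hinit : μ 0 = 0)
    (hode : ∀ t ∈ Set.Ici (0 : ℝ),
      HasDerivWithinAt μ
        ((α / ((Fintype.card V : ℝ) * Real.sqrt ((ball E r c).card : ℝ)))
          * ((dstar : ℝ) - Fc E r c (μ t)))
        (Set.Ici (0 : ℝ)) t) :
    ∃ μstar : ℝ,
      Fc E r c μstar = (dstar : ℝ)
      ∧ (∀ y : ℝ, Fc E r c y = (dstar : ℝ) → y = μstar)
      ∧ Filter.Tendsto μ Filter.atTop (nhds μstar)
      ∧ (Fc E r c 0 ≤ (dstar : ℝ) → MonotoneOn μ (Set.Ici (0 : ℝ)))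
      ∧ ((dstar : ℝ) < Fc E r c 0 → AntitoneOn μ (Set.Ici (0 : ℝ)))
      ∧ ∃ γ : ℝ, 0 < γ ∧ ∃ C : ℝ, 0 ≤ C ∧
          ∀ t ∈ Set.Ici (0 : ℝ), |μ t - μstar| ≤ C * Real.exp (-γ * t) :=
  stmt9_general E r c hc0 dstar hd1 hd2 α hα μ hinit hode
end

section
/- Assume c0 ≥ 1 and d_max ≥ 1. Then for every μ ≥ 0, d_max − F(μ) ≥ (d_max·c0·e^{−λ} / (2n)) · e^{−λ·d_max·μ}. -/
open Finset Filter Matrix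

variable {V : Type*}

/-!
Each exponent `ξ_u(μ)` is at most `λ(1 + d_max μ)`, so with `M = exp(λ(1 + d_max μ)) ≥ 1` the
denominator satisfies `E_+ + c0 ≤ |N_{c+1}| M + c0 M = n M`. On the other hand `S ≤ d_max E_+`, so
`d_max − F = (d_max E_+ − S + d_max c0) / (E_+ + c0) ≥ d_max c0 / (E_+ + c0) ≥ d_max c0 / (n M)`,
which is twice the claimed bound.
-/

theorem le_sub_div_sum_mul_add {ι : Type*} (s : Finset ι) (w d : ι → ℝ) {D c₀ : ℝ}
    (hw : ∀ i ∈ s, 0 ≤ w i) (hd : ∀ i ∈ s, d i ≤ D) (hc₀ : 0 < c₀) :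
    D * c₀ / (∑ i ∈ s, w i + c₀) ≤ D - (∑ i ∈ s, d i * w i) / (∑ i ∈ s, w i + c₀) := by
  have hpos : 0 < ∑ i ∈ s, w i + c₀ := by linarith [sum_nonneg hw]
  have hsum : ∑ i ∈ s, d i * w i ≤ D * ∑ i ∈ s, w i := by
    rw [mul_sum]
    exact sum_le_sum fun i hi => mul_le_mul_of_nonneg_right (hd i hi) (hw i hi)
  rw [le_sub_iff_add_le, ← add_div, div_le_iff₀ hpos]
  linarith

theorem sum_add_le_card_add_mul {ι : Type*} (s : Finset ι) (w : ι → ℝ) {M c₀ : ℝ}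
    (hw : ∀ i ∈ s, w i ≤ M) (hM : 1 ≤ M) (hc₀ : 0 ≤ c₀) :
    ∑ i ∈ s, w i + c₀ ≤ (s.card + c₀) * M := by
  have hsum : ∑ i ∈ s, w i ≤ s.card * M := by
    simpa using sum_le_card_nsmul s w M hw
  nlinarith

section Ball

variable {V : Type*} [Fintype V] [DecidableEq V] (E : Finset (V × V)) (r : V) (c : ℕ)

theorem lamc_nonneg : 0 ≤ lamc E r c := by
  unfold lamc
  positivity

theorem degc_le_sup (u : V) : (degc E r c u : ℝ) ≤ ((univ.sup (degc E r c) : ℕ) : ℝ) := by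
  exact_mod_cast le_sup (mem_univ u)

theorem lamc_mul_le {x : ℝ} (hx : 0 ≤ x) (u : V) :
    lamc E r c * ((if u ∈ ball E r c then 1 else 0) + x * (degc E r c u : ℝ))
      ≤ lamc E r c * (1 + ((univ.sup (degc E r c) : ℕ) : ℝ) * x) := by
  have hind : (if u ∈ ball E r c then (1 : ℝ) else 0) ≤ 1 := by split_ifs <;> norm_num
  gcongr ?_ * ?_
  · exact lamc_nonneg E r c
  · nlinarith [degc_le_sup E r c u]

end Ball

theorem stmt11_general {V : Type*} [Fintype V] [DecidableEq V]
    (E : Finset (V × V)) (r : V) (c : ℕ)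
    (hc0 : (ball E r (c + 1)).card + 1 ≤ Fintype.card V) :
    ∀ x : ℝ, 0 ≤ x →
      ((Finset.univ.sup (degc E r c) : ℕ) : ℝ)
            * ((Fintype.card V : ℝ) - ((ball E r (c + 1)).card : ℝ))
            * Real.exp (-(lamc E r c)) / (2 * (Fintype.card V : ℝ))
          * Real.exp (-(lamc E r c * ((Finset.univ.sup (degc E r c) : ℕ) : ℝ) * x))
        ≤ ((Finset.univ.sup (degc E r c) : ℕ) : ℝ) - Fc E r c x := by
  intro x hx
  have hcard : ((ball E r (c + 1)).card : ℝ) + 1 ≤ Fintype.card V := by exact_mod_cast hc0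
  set D : ℝ := ((univ.sup (degc E r c) : ℕ) : ℝ)
  set n : ℝ := (Fintype.card V : ℝ)
  set c₀ : ℝ := n - ((ball E r (c + 1)).card : ℝ)
  set M := Real.exp (lamc E r c * (1 + D * x))
  have hc₀ : 1 ≤ c₀ := by linarith
  have hM : 1 ≤ M := Real.one_le_exp (by have := lamc_nonneg E r c; positivity)
  set w : V → ℝ := fun u =>
    Real.exp (lamc E r c * ((if u ∈ ball E r c then 1 else 0) + x * (degc E r c u : ℝ)))
  have hw : ∀ u ∈ ball E r (c + 1), 0 ≤ w u := fun u _ => (Real.exp_pos _).le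
  have hden : ∑ u ∈ ball E r (c + 1), w u + c₀ ≤ 2 * n * M := by
    have := sum_add_le_card_add_mul (ball E r (c + 1)) w (M := M) (c₀ := c₀)
      (fun u _ => Real.exp_le_exp.mpr (lamc_mul_le E r c hx u)) hM (by linarith)
    have : 0 ≤ n * M := by positivity
    linarith [show (((ball E r (c + 1)).card : ℝ) + c₀) * M = n * M by ring]
  have hexp : Real.exp (-lamc E r c) * Real.exp (-(lamc E r c * D * x)) = M⁻¹ := by
    rw [← Real.exp_add, ← Real.exp_neg]
    ring_nf
  calc D * c₀ * Real.exp (-lamc E r c) / (2 * n) * Real.exp (-(lamc E r c * D * x))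
      = D * c₀ / (2 * n * M) := by
        rw [div_mul_eq_mul_div, mul_assoc (D * c₀), hexp, ← div_eq_mul_inv, div_div, mul_comm M]
    _ ≤ D * c₀ / (∑ u ∈ ball E r (c + 1), w u + c₀) :=
        div_le_div_of_nonneg_left (by positivity) (by linarith [sum_nonneg hw]) hden
    _ ≤ D - Fc E r c x :=
        le_sub_div_sum_mul_add _ w _ hw
          (fun u _ => degc_le_sup E r c u)
          (by linarith)

/-- lower bound on the gap d_max − F(μ) for μ ≥ 0:
d_max − F(μ) ≥ (d_max·c0·e^{−λ}/(2n))·e^{−λ·d_max·μ}. -/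
theorem stmt11 {V : Type*} [Fintype V] [DecidableEq V]
    (E : Finset (V × V)) (r : V) (c : ℕ)
    (hc0 : (ball E r (c + 1)).card + 1 ≤ Fintype.card V)
    (hdmax : 1 ≤ Finset.univ.sup (degc E r c)) :
    ∀ x : ℝ, 0 ≤ x →
      ((Finset.univ.sup (degc E r c) : ℕ) : ℝ)
            * ((Fintype.card V : ℝ) - ((ball E r (c + 1)).card : ℝ))
            * Real.exp (-(lamc E r c)) / (2 * (Fintype.card V : ℝ))
          * Real.exp (-(lamc E r c * ((Finset.univ.sup (degc E r c) : ℕ) : ℝ) * x))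
        ≤ ((Finset.univ.sup (degc E r c) : ℕ) : ℝ) - Fc E r c x :=
  stmt11_general E r c hc0
end

section
/- Let d be a positive integer, Voc a finite set with V ⊆ Voc, and suppose the vectors {E(v)}_{v∈Voc} ∪ {E_s(v)}_{v∈Voc} in ℝ^d satisfy ⟨E(u), E(v)⟩ = 1{u=v}, ⟨E_s(u), E_s(v)⟩ = 1{u=v}, and ⟨E(u), E_s(v)⟩ = 0 for all u, v ∈ Voc. Enumerate the edge set E as (s_1→t_1), …, (s_m→t_m) and set h_i = E_s(s_i) + E(t_i). Let μ > 0, let λ_u > 0 for each u ∈ N_c, and set h = Σ_{u∈N_c} λ_u·E(u) and W = μ·Σ_{u∈V} E(u)·E_s(u)^T. Define β_v = ⟨E(v), h + Σ_{i=1}^m (h^T W h_i)·h_i⟩ for v ∈ V. Then β_v = λ_v·1{v ∈ N_c} + μ·Σ_{u ∈ N_c : (u→v) ∈ E} λ_u for every v ∈ V; moreover β_v ≥ 0 for all v, β_v > 0 for every v ∈ N_{c+1}, and β_v = 0 for every v ∉ N_{c+1}, i.e., the support of (β_v)_{v∈V} is exactly the one-step expansion N_{c+1}. -/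
open Finset Filter Matrix

variable {V : Type*}

/-!
Orthonormality turns every inner product into a Kronecker delta. The matrix `W` sends the edge
vector `E_s(s) + E(t)` to `μ • E(s)`, so edge `s → t` receives the weight `μ λ_s 1{s ∈ N_c}`,
and its `E(t)`-component is all that the readout at `v` sees. Hence `β_v` collects `λ_v` for
`v ∈ N_c` and `μ λ_u` for each in-neighbour `u ∈ N_c`; with positive weights it is positive
exactly on `N_c` together with its out-neighbours, which is `N_{c+1}`.
-/

lemma mem_ball_succ [Fintype V] [DecidableEq V] {E : Finset (V × V)} {r v : V} {k : ℕ} :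
    v ∈ ball E r (k + 1) ↔ v ∈ ball E r k ∨ ∃ u ∈ ball E r k, (u, v) ∈ E := by
  simp [ball]

section Orthonormal

variable {ι n R : Type*} [Fintype n] [CommSemiring R]

lemma dotProduct_comp_embedding {κ : Type*} [DecidableEq ι] [DecidableEq κ] (j : ι ↪ κ)
    {f g : κ → n → R} (hfg : ∀ a b, f a ⬝ᵥ g b = if a = b then 1 else 0) (u v : ι) :
    f (j u) ⬝ᵥ g (j v) = if u = v then 1 else 0 := by
  simp [hfg, j.injective.eq_iff]

lemma dotProduct_sum_smul_of_orthonormal [DecidableEq ι] {f g : ι → n → R}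
    (hfg : ∀ u v, f u ⬝ᵥ g v = if u = v then 1 else 0) (s : Finset ι) (a : ι → R) (v : ι) :
    f v ⬝ᵥ ∑ u ∈ s, a u • g u = if v ∈ s then a v else 0 := by
  simp [dotProduct_sum, hfg, Finset.sum_ite_eq]

lemma sum_vecMulVec_mulVec (s : Finset ι) (a b : ι → n → R) (x : n → R) :
    (∑ u ∈ s, vecMulVec (a u) (b u)) *ᵥ x = ∑ u ∈ s, (b u ⬝ᵥ x) • a u := by
  simp [sum_mulVec, vecMulVec_mulVec]

end Orthonormal

lemma sum_edges_into_eq_sum_filter {R : Type*} [AddCommMonoid R] [DecidableEq V]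
    (E : Finset (V × V)) (N : Finset V) (f : V → R) (v : V) :
    ∑ e ∈ E with e.1 ∈ N ∧ e.2 = v, f e.1 = ∑ u ∈ N with (u, v) ∈ E, f u := by
  refine Finset.sum_nbij' Prod.fst (fun u => (u, v)) ?_ ?_ ?_ ?_ ?_ <;> aesop

section OneHop

variable {R : Type*} [CommSemiring R] [DecidableEq V]

def oneHop (E : Finset (V × V)) (N : Finset V) (μ : R) (lam : V → R)
    (v : V) : R :=
  lam v * (if v ∈ N then 1 else 0) + μ * ∑ u ∈ N with (u, v) ∈ E, lam u

lemma dotProduct_attention_eq_oneHop [Fintype V] {n : Type*} [Fintype n]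
    {e s : V → n → R} (hee : ∀ u v, e u ⬝ᵥ e v = if u = v then 1 else 0)
    (hss : ∀ u v, s u ⬝ᵥ s v = if u = v then 1 else 0) (hes : ∀ u v, e u ⬝ᵥ s v = 0)
    (E : Finset (V × V)) (N : Finset V) (μ : R) (lam : V → R) (v : V) :
    let h := ∑ u ∈ N, lam u • e u
    let W := μ • ∑ u, vecMulVec (e u) (s u)
    e v ⬝ᵥ (h + ∑ x ∈ E, (h ⬝ᵥ (W *ᵥ (s x.1 + e x.2))) • (s x.1 + e x.2)) =
      oneHop E N μ lam v := by
  intro h W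
  have hse : ∀ u v, s u ⬝ᵥ e v = 0 := fun u v => by
    rw [dotProduct_comm, hes]
  have hW : ∀ a b, W *ᵥ (s a + e b) = μ • e a := fun a b => by
    simp [W, smul_mulVec, sum_vecMulVec_mulVec, dotProduct_add, hss, hse]
  have hh : ∀ a, e a ⬝ᵥ h = if a ∈ N then lam a else 0 :=
    dotProduct_sum_smul_of_orthonormal hee N lam
  have hhe : ∀ a, h ⬝ᵥ e a = if a ∈ N then lam a else 0 := fun a => by
    rw [dotProduct_comm, hh]
  have hedge : ∀ a b, e v ⬝ᵥ (s a + e b) = if b = v then 1 else 0 := fun a b => by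
    simp [dotProduct_add, hes, hee, eq_comm]
  rw [oneHop, dotProduct_add, hh, dotProduct_sum, ← sum_edges_into_eq_sum_filter,
    Finset.sum_filter, Finset.mul_sum]
  simp only [dotProduct_smul, hW, hedge, hhe, smul_eq_mul]
  congr 1
  · rw [mul_ite, mul_one, mul_zero]
  · refine Finset.sum_congr rfl fun ⟨a, b⟩ _ => ?_
    by_cases ha : a ∈ N <;> by_cases hb : b = v <;> simp [ha, hb]

lemma oneHop_nonneg [PartialOrder R] [IsOrderedRing R] {E : Finset (V × V)}
    {N : Finset V} {μ : R} {lam : V → R} (hμ : 0 ≤ μ) (hlam : ∀ u ∈ N, 0 ≤ lam u) (v : V) :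
    0 ≤ oneHop E N μ lam v := by
  have hsum : 0 ≤ ∑ u ∈ N with (u, v) ∈ E, lam u :=
    Finset.sum_nonneg fun u hu => hlam u (Finset.mem_filter.1 hu).1
  unfold oneHop
  split_ifs with hv
  · exact add_nonneg (by simpa using hlam v hv) (mul_nonneg hμ hsum)
  · simpa using mul_nonneg hμ hsum

lemma oneHop_pos [PartialOrder R] [IsStrictOrderedRing R] {E : Finset (V × V)}
    {N : Finset V} {μ : R} {lam : V → R} (hμ : 0 < μ) (hlam : ∀ u ∈ N, 0 < lam u) {v : V}
    (hv : v ∈ N ∨ ∃ u ∈ N, (u, v) ∈ E) : 0 < oneHop E N μ lam v := by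
  have hsum : 0 ≤ ∑ u ∈ N with (u, v) ∈ E, lam u :=
    Finset.sum_nonneg fun u hu => (hlam u (Finset.mem_filter.1 hu).1).le
  rcases hv with hv | ⟨u, hu, huv⟩
  · rw [oneHop, if_pos hv, mul_one]
    exact add_pos_of_pos_of_nonneg (hlam v hv) (mul_nonneg hμ.le hsum)
  · have hsum_pos : 0 < ∑ u ∈ N with (u, v) ∈ E, lam u :=
      Finset.sum_pos' (fun w hw => (hlam w (Finset.mem_filter.1 hw).1).le)
        ⟨u, Finset.mem_filter.2 ⟨hu, huv⟩, hlam u hu⟩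
    refine add_pos_of_nonneg_of_pos ?_ (mul_pos hμ hsum_pos)
    split_ifs with hvN
    · simpa using (hlam v hvN).le
    · simp

lemma oneHop_eq_zero {E : Finset (V × V)} {N : Finset V} {μ : R}
    {lam : V → R} {v : V} (hv : ¬(v ∈ N ∨ ∃ u ∈ N, (u, v) ∈ E)) : oneHop E N μ lam v = 0 := by
  simp only [not_or, not_exists, not_and] at hv
  have hempty : {u ∈ N | (u, v) ∈ E} = ∅ := Finset.filter_eq_empty_iff.2 hv.2
  simp [oneHop, hv.1, hempty]

end OneHop

theorem stmt12_general {V Voc : Type*} [Fintype V] [DecidableEq V] [DecidableEq Voc]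
    (E : Finset (V × V)) (r : V) (c : ℕ)
    (d : ℕ) (j : V ↪ Voc)
    (Emb Es : Voc → Fin d → ℝ)
    (horthE : ∀ u v : Voc, Emb u ⬝ᵥ Emb v = if u = v then (1 : ℝ) else 0)
    (horthS : ∀ u v : Voc, Es u ⬝ᵥ Es v = if u = v then (1 : ℝ) else 0)
    (horthC : ∀ u v : Voc, Emb u ⬝ᵥ Es v = 0)
    (μ : ℝ) (hμ : 0 < μ)
    (lam : V → ℝ) (hlam : ∀ u ∈ ball E r c, 0 < lam u)
    (h : Fin d → ℝ) (hh : h = ∑ u ∈ ball E r c, lam u • Emb (j u))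
    (W : Matrix (Fin d) (Fin d) ℝ)
    (hW : W = μ • ∑ u : V, vecMulVec (Emb (j u)) (Es (j u)))
    (he : V × V → Fin d → ℝ) (hhe : ∀ e : V × V, he e = Es (j e.1) + Emb (j e.2))
    (β : V → ℝ)
    (hβ : ∀ v : V, β v = Emb (j v) ⬝ᵥ (h + ∑ e ∈ E, (h ⬝ᵥ (W *ᵥ he e)) • he e)) :
    ∀ v : V,
      (β v = lam v * (if v ∈ ball E r c then 1 else 0)
          + μ * ∑ u ∈ (ball E r c).filter (fun u => (u, v) ∈ E), lam u)
      ∧ 0 ≤ β v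
      ∧ (v ∈ ball E r (c + 1) → 0 < β v)
      ∧ (v ∉ ball E r (c + 1) → β v = 0) := by
  intro v
  have hβv : β v = oneHop E (ball E r c) μ lam v := by
    rw [hβ, hh, hW]
    simp only [hhe]
    exact dotProduct_attention_eq_oneHop (dotProduct_comp_embedding j horthE)
      (dotProduct_comp_embedding j horthS) (fun _ _ => horthC _ _) E (ball E r c) μ lam v
  rw [hβv, mem_ball_succ]
  exact ⟨rfl, oneHop_nonneg hμ.le (fun u hu => (hlam u hu).le) v, oneHop_pos hμ hlam,
    oneHop_eq_zero⟩

/-- one-hop expansion of continuous thoughts: the token-projected output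
has coefficients β_v = λ_v·1{v ∈ N_c} + μ·Σ_{u ∈ N_c : (u→v) ∈ E} λ_u, which are
nonnegative, strictly positive exactly on N_{c+1}, and zero outside N_{c+1}. -/
theorem stmt12 {V Voc : Type*} [Fintype V] [DecidableEq V] [Fintype Voc] [DecidableEq Voc]
    (E : Finset (V × V)) (r : V) (c : ℕ)
    (d : ℕ) (hd : 0 < d) (j : V ↪ Voc)
    (Emb Es : Voc → Fin d → ℝ)
    (horthE : ∀ u v : Voc, Emb u ⬝ᵥ Emb v = if u = v then (1 : ℝ) else 0)
    (horthS : ∀ u v : Voc, Es u ⬝ᵥ Es v = if u = v then (1 : ℝ) else 0)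
    (horthC : ∀ u v : Voc, Emb u ⬝ᵥ Es v = 0)
    (μ : ℝ) (hμ : 0 < μ)
    (lam : V → ℝ) (hlam : ∀ u ∈ ball E r c, 0 < lam u)
    (h : Fin d → ℝ) (hh : h = ∑ u ∈ ball E r c, lam u • Emb (j u))
    (W : Matrix (Fin d) (Fin d) ℝ)
    (hW : W = μ • ∑ u : V, vecMulVec (Emb (j u)) (Es (j u)))
    (he : V × V → Fin d → ℝ) (hhe : ∀ e : V × V, he e = Es (j e.1) + Emb (j e.2))
    (β : V → ℝ)
    (hβ : ∀ v : V, β v = Emb (j v) ⬝ᵥ (h + ∑ e ∈ E, (h ⬝ᵥ (W *ᵥ he e)) • he e)) :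
    ∀ v : V,
      (β v = lam v * (if v ∈ ball E r c then 1 else 0)
          + μ * ∑ u ∈ (ball E r c).filter (fun u => (u, v) ∈ E), lam u)
      ∧ 0 ≤ β v
      ∧ (v ∈ ball E r (c + 1) → 0 < β v)
      ∧ (v ∉ ball E r (c + 1) → β v = 0) :=
  stmt12_general E r c d j Emb Es horthE horthS horthC μ hμ lam hlam h hh W hW he hhe β hβ
end

section
/- Assume there exist an index i and a node v ∈ N^{(i)} \ {c_*^{(i)}} such that λ_v^{(i)} − λ_{c_*}^{(i)} = Δ_train. Then for every unit vector u = (u_A, u_R) ∈ ℝ² with u_A, u_R ≥ 0, γ(u) = min{ u_A·λ_*, u_R − u_A·Δ_train }. -/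
/-- closed-form lower envelope of the hard margin:
if Δ_train is attained, then for every unit direction u with nonnegative coordinates,
γ(u) = min{u_A·λ_*, u_R − u_A·Δ_train}. -/
theorem stmt15 {ι τ : Type*} [Fintype ι] [Nonempty ι] [DecidableEq τ]
    (Vi Ni : ι → Finset τ) (hsub : ∀ i, Ni i ⊆ Vi i)
    (c1 c2 cstar cperp : ι → τ)
    (hc1 : ∀ i, c1 i ∈ Vi i) (hc2 : ∀ i, c2 i ∈ Vi i) (hc12 : ∀ i, c1 i ≠ c2 i)
    (hpair : ∀ i, ({cstar i, cperp i} : Finset τ) = {c1 i, c2 i})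
    (hstar : ∀ i, cstar i ∈ Ni i) (hperp : ∀ i, cperp i ∉ Ni i)
    (lam : ι → τ → ℝ)
    (hlampos : ∀ i, ∀ v ∈ Ni i, 0 < lam i v) (hlamle : ∀ i v, lam i v ≤ 1)
    (hlamzero : ∀ i v, v ∉ Ni i → lam i v = 0)
    (x : ι → τ → ℝ × ℝ)
    (hx : ∀ i v, x i v = (lam i v, if v = c1 i ∨ v = c2 i then 1 else 0))
    (lamStar : ℝ) (hlamStar : lamStar = sInf {y : ℝ | ∃ i : ι, y = lam i (cstar i)})
    (ΔTrain : ℝ)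
    (hΔTrain : ΔTrain = sSup (insert 0
      {y : ℝ | ∃ i : ι, ∃ v ∈ (Ni i).erase (cstar i),
        y = max (lam i v - lam i (cstar i)) 0}))
    (γ : ℝ × ℝ → ℝ)
    (hγ : ∀ u : ℝ × ℝ, γ u = sInf {y : ℝ | ∃ i : ι, ∃ v ∈ (Vi i).erase (cstar i),
      y = u.1 * ((x i (cstar i)).1 - (x i v).1) + u.2 * ((x i (cstar i)).2 - (x i v).2)})
    (hattain : ∃ i : ι, ∃ v ∈ (Ni i).erase (cstar i),
      lam i v - lam i (cstar i) = ΔTrain) :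
    ∀ u : ℝ × ℝ, 0 ≤ u.1 → 0 ≤ u.2 → u.1 ^ 2 + u.2 ^ 2 = 1 →
      γ u = min (u.1 * lamStar) (u.2 - u.1 * ΔTrain) := by

  intro u hu1 hu2 _hunit
  -- basic facts about the pair
  have hne : ∀ i, cstar i ≠ cperp i := fun i h => hperp i (h ▸ hstar i)
  have hpair' : ∀ i v, (v = c1 i ∨ v = c2 i) ↔ (v = cstar i ∨ v = cperp i) := by
    intro i v
    constructor
    · intro hv
      have hm : v ∈ ({c1 i, c2 i} : Finset τ) := by
        rcases hv with h | h <;> simp [h]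
      rw [← hpair i] at hm; simpa using hm
    · intro hv
      have hm : v ∈ ({cstar i, cperp i} : Finset τ) := by
        rcases hv with h | h <;> simp [h]
      rw [hpair i] at hm; simpa using hm
  have hcsPair : ∀ i, cstar i = c1 i ∨ cstar i = c2 i :=
    fun i => (hpair' i (cstar i)).mpr (Or.inl rfl)
  have hcpPair : ∀ i, cperp i = c1 i ∨ cperp i = c2 i :=
    fun i => (hpair' i (cperp i)).mpr (Or.inr rfl)
  have hcpV : ∀ i, cperp i ∈ Vi i := by
    intro i; rcases hcpPair i with h | h
    · rw [h]; exact hc1 i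
    · rw [h]; exact hc2 i
  have hx1 : ∀ i v, (x i v).1 = lam i v := by intro i v; rw [hx]
  have hx2 : ∀ i v, (x i v).2 = (if v = c1 i ∨ v = c2 i then (1:ℝ) else 0) := by
    intro i v; rw [hx]
  have hxcs : ∀ i, (x i (cstar i)).2 = 1 := by
    intro i; rw [hx2]; exact if_pos (hcsPair i)
  have hxcp : ∀ i, (x i (cperp i)).2 = 1 := by
    intro i; rw [hx2]; exact if_pos (hcpPair i)
  have hxN : ∀ i, ∀ v ∈ Ni i, v ≠ cstar i → (x i v).2 = 0 := by
    intro i v hv hvne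
    rw [hx2]; apply if_neg
    intro hcon
    rcases (hpair' i v).mp hcon with h | h
    · exact hvne h
    · exact hperp i (h ▸ hv)
  -- ΔTrain facts
  have hbdd : BddAbove (insert 0
      {y : ℝ | ∃ i : ι, ∃ v ∈ (Ni i).erase (cstar i),
        y = max (lam i v - lam i (cstar i)) 0}) := by
    refine ⟨1, ?_⟩
    rintro y (rfl | ⟨i, v, hv, rfl⟩)
    · exact zero_le_one
    · refine max_le ?_ zero_le_one
      have h1 : lam i v ≤ 1 := hlamle i v
      have h2 : 0 < lam i (cstar i) := hlampos i _ (hstar i)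
      linarith
  have hΔ0 : 0 ≤ ΔTrain := by
    rw [hΔTrain]; exact le_csSup hbdd (Set.mem_insert _ _)
  have hΔle : ∀ i, ∀ v ∈ (Ni i).erase (cstar i), lam i v - lam i (cstar i) ≤ ΔTrain := by
    intro i v hv
    refine le_trans (le_max_left _ 0) ?_
    rw [hΔTrain]
    exact le_csSup hbdd (Set.mem_insert_of_mem _ ⟨i, v, hv, rfl⟩)
  -- lamStar facts
  have hLfin : ({y : ℝ | ∃ i : ι, y = lam i (cstar i)}).Finite := by
    have : {y : ℝ | ∃ i : ι, y = lam i (cstar i)} = Set.range (fun i => lam i (cstar i)) := by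
      ext y; simp [Set.range, eq_comm]
    rw [this]; exact Set.finite_range _
  have hLne : ({y : ℝ | ∃ i : ι, y = lam i (cstar i)}).Nonempty := by
    obtain ⟨i⟩ := (inferInstance : Nonempty ι)
    exact ⟨lam i (cstar i), ⟨i, rfl⟩⟩
  have hLmem : ∃ i0 : ι, lam i0 (cstar i0) = lamStar := by
    have := hLne.csInf_mem hLfin
    rw [← hlamStar] at this
    obtain ⟨i0, h0⟩ := this
    exact ⟨i0, h0.symm⟩
  have hLle : ∀ i, lamStar ≤ lam i (cstar i) := by
    intro i
    rw [hlamStar]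
    exact csInf_le hLfin.bddBelow ⟨i, rfl⟩
  obtain ⟨i0, hi0⟩ := hLmem
  obtain ⟨i1, v1, hv1, hv1eq⟩ := hattain
  -- the margin set
  set S : Set ℝ := {y : ℝ | ∃ i : ι, ∃ v ∈ (Vi i).erase (cstar i),
      y = u.1 * ((x i (cstar i)).1 - (x i v).1) + u.2 * ((x i (cstar i)).2 - (x i v).2)}
    with hS
  set m : ℝ := min (u.1 * lamStar) (u.2 - u.1 * ΔTrain) with hm
  -- lower bound for all elements of S
  have hlb : ∀ y ∈ S, m ≤ y := by
    rintro y ⟨i, v, hv, rfl⟩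
    rw [Finset.mem_erase] at hv
    obtain ⟨hvne, hvV⟩ := hv
    by_cases hvN : v ∈ Ni i
    · -- v in N, v ≠ cstar : second branch
      have hx2v : (x i v).2 = 0 := hxN i v hvN hvne
      have hle : lam i v - lam i (cstar i) ≤ ΔTrain := hΔle i v (Finset.mem_erase.mpr ⟨hvne, hvN⟩)
      have : u.1 * (lam i v - lam i (cstar i)) ≤ u.1 * ΔTrain :=
        mul_le_mul_of_nonneg_left hle hu1
      rw [hx1, hx1, hxcs, hx2v]
      refine le_trans (min_le_right _ _) ?_
      nlinarith
    · -- v ∉ N : lam v = 0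
      have hl0 : lam i v = 0 := hlamzero i v hvN
      by_cases hvc : v = c1 i ∨ v = c2 i
      · -- then v = cperp
        have hx2v : (x i v).2 = 1 := by rw [hx2]; exact if_pos hvc
        rw [hx1, hx1, hxcs, hx2v, hl0]
        refine le_trans (min_le_left _ _) ?_
        have := mul_le_mul_of_nonneg_left (hLle i) hu1
        nlinarith
      · have hx2v : (x i v).2 = 0 := by rw [hx2]; exact if_neg hvc
        rw [hx1, hx1, hxcs, hx2v, hl0]
        refine le_trans (min_le_right _ _) ?_
        have h2 : 0 < lam i (cstar i) := hlampos i _ (hstar i)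
        nlinarith
  have hSbdd : BddBelow S := ⟨m, hlb⟩
  -- m1 attained
  have hm1 : u.1 * lamStar ∈ S := by
    refine ⟨i0, cperp i0, Finset.mem_erase.mpr ⟨(hne i0).symm, hcpV i0⟩, ?_⟩
    have hl0 : lam i0 (cperp i0) = 0 := hlamzero i0 _ (hperp i0)
    rw [hx1, hx1, hxcs, hxcp, hl0, hi0]
    ring
  -- m2 attained
  have hm2 : u.2 - u.1 * ΔTrain ∈ S := by
    rw [Finset.mem_erase] at hv1
    obtain ⟨hv1ne, hv1N⟩ := hv1
    refine ⟨i1, v1, Finset.mem_erase.mpr ⟨hv1ne, hsub i1 hv1N⟩, ?_⟩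
    have hx2v : (x i1 v1).2 = 0 := hxN i1 v1 hv1N hv1ne
    rw [hx1, hx1, hxcs, hx2v]
    rw [← hv1eq]
    ring
  have hSne : S.Nonempty := ⟨_, hm1⟩
  rw [hγ]
  apply le_antisymm
  · exact le_min (csInf_le hSbdd hm1) (csInf_le hSbdd hm2)
  · exact le_csInf hSne hlb
end

section
/- Assume there exist an index i and a node v ∈ N^{(i)} \ {c_*^{(i)}} such that λ_v^{(i)} − λ_{c_*}^{(i)} = Δ_train. Set ρ = λ_* + Δ_train. Then the maximum of γ(u) over unit vectors u = (u_A, u_R) ∈ ℝ² with u_A, u_R ≥ 0 is attained uniquely at u^* = (u_A^*, u_R^*) = (1/√(1+ρ²), ρ/√(1+ρ²)); in particular u_R^*/u_A^* = λ_* + Δ_train and u_A^*, u_R^* > 0. -/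
/-!
On the nonnegative quadrant the margins `⟨u, Δ_{i,v}⟩` come in three kinds: `u_A λ_{c_*}` for
`v = c_⊥`, `u_R - (λ_v - λ_{c_*}) u_A ≥ u_R - Δ_train u_A` for `v ∈ N \ {c_*}`, and
`u_R + λ_{c_*} u_A` for the remaining `v`. Both extreme values are attained, so
`γ(u) = min (λ_* u_A) (u_R - Δ_train u_A)`. On the unit circle, `γ(u) ≥ λ_* / √(1 + ρ²)` forces
`u_A ≥ 1 / √(1 + ρ²)` and `u_R ≥ ρ / √(1 + ρ²)`; these bounds are the coordinates of a unit
vector, so both are equalities and `u^*` is the only maximiser.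
-/

open Set

theorem eq_and_eq_of_le_of_le_of_sq_add_sq_eq {a b x y : ℝ} (ha : 0 ≤ a) (hb : 0 ≤ b)
    (hx : a ≤ x) (hy : b ≤ y) (h : x ^ 2 + y ^ 2 = a ^ 2 + b ^ 2) : x = a ∧ y = b := by
  constructor <;> nlinarith

theorem isLeast_csInf_range {ι α : Type*} [Finite ι] [Nonempty ι]
    [ConditionallyCompleteLinearOrder α] (f : ι → α) : IsLeast (range f) (sInf (range f)) :=
  ⟨(range_nonempty f).csInf_mem (finite_range f),
    fun _ ⟨i, hi⟩ => hi ▸ csInf_le (finite_range f).bddBelow ⟨i, rfl⟩⟩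

section Optimization

/-- The margin `γ` on the nonnegative quadrant, for `L = λ_*` and `D = Δ_train`. -/
def reducedMargin (L D : ℝ) (u : ℝ × ℝ) : ℝ := min (L * u.1) (u.2 - D * u.1)

noncomputable def optimalDirection (r : ℝ) : ℝ × ℝ := (1 / √(1 + r ^ 2), r / √(1 + r ^ 2))

theorem optimalDirection_sq_add_sq (r : ℝ) :
    (optimalDirection r).1 ^ 2 + (optimalDirection r).2 ^ 2 = 1 := by
  have hs : √(1 + r ^ 2) ^ 2 = 1 + r ^ 2 := Real.sq_sqrt (by positivity)
  have hs0 : √(1 + r ^ 2) ≠ 0 := by positivity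
  simp only [optimalDirection]
  field_simp
  linarith

theorem optimalDirection_pos {r : ℝ} (hr : 0 < r) :
    0 < (optimalDirection r).1 ∧ 0 < (optimalDirection r).2 :=
  ⟨by simp only [optimalDirection]; positivity, by simp only [optimalDirection]; positivity⟩

theorem optimalDirection_snd_div_fst (r : ℝ) :
    (optimalDirection r).2 / (optimalDirection r).1 = r := by
  have hs0 : √(1 + r ^ 2) ≠ 0 := by positivity
  simp only [optimalDirection]
  field_simp

theorem reducedMargin_optimalDirection (L D : ℝ) :
    reducedMargin L D (optimalDirection (L + D)) = L / √(1 + (L + D) ^ 2) := by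
  simp only [reducedMargin, optimalDirection]
  rw [show (L + D) / √(1 + (L + D) ^ 2) - D * (1 / √(1 + (L + D) ^ 2))
      = L * (1 / √(1 + (L + D) ^ 2)) by ring, min_self, mul_one_div]

theorem eq_optimalDirection_of_le_reducedMargin {L D : ℝ} (hL : 0 < L) (hD : 0 ≤ D) {u : ℝ × ℝ}
    (hu : u.1 ^ 2 + u.2 ^ 2 = 1)
    (h : reducedMargin L D (optimalDirection (L + D)) ≤ reducedMargin L D u) :
    u = optimalDirection (L + D) := by
  rw [reducedMargin_optimalDirection] at h
  set s := √(1 + (L + D) ^ 2)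
  have hA : 1 / s ≤ u.1 :=
    le_of_mul_le_mul_left (by rw [mul_one_div]; exact h.trans (min_le_left _ _)) hL
  have hR : (L + D) / s ≤ u.2 :=
    calc (L + D) / s = L / s + D * (1 / s) := by ring
      _ ≤ (u.2 - D * u.1) + D * u.1 :=
        add_le_add (h.trans (min_le_right _ _)) (mul_le_mul_of_nonneg_left hA hD)
      _ = u.2 := by ring
  obtain ⟨h1, h2⟩ := eq_and_eq_of_le_of_le_of_sq_add_sq_eq (by positivity) (by positivity) hA hR
    (hu.trans (optimalDirection_sq_add_sq (L + D)).symm)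
  exact Prod.ext h1 h2

theorem reducedMargin_le_optimalDirection {L D : ℝ} (hL : 0 < L) (hD : 0 ≤ D) {u : ℝ × ℝ}
    (hu : u.1 ^ 2 + u.2 ^ 2 = 1) :
    reducedMargin L D u ≤ reducedMargin L D (optimalDirection (L + D)) := by
  by_contra! h
  exact h.ne' (congrArg _ (eq_optimalDirection_of_le_reducedMargin hL hD hu h.le))

end Optimization

section Margins

variable {τ : Type*} [DecidableEq τ] {c1 c2 cs cp : τ}

theorem eq_or_eq_iff_of_pair_eq (hpair : ({cs, cp} : Finset τ) = {c1, c2})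
    (v : τ) : (v = c1 ∨ v = c2) ↔ (v = cs ∨ v = cp) := by
  have := Finset.ext_iff.1 hpair v
  simp only [Finset.mem_insert, Finset.mem_singleton] at this
  exact this.symm

variable {lam : τ → ℝ} {x : τ → ℝ × ℝ}

theorem margin_term_perp (hpair : ({cs, cp} : Finset τ) = {c1, c2})
    (hx : ∀ v, x v = (lam v, if v = c1 ∨ v = c2 then 1 else 0)) (hcp : lam cp = 0)
    (u : ℝ × ℝ) :
    u.1 * ((x cs).1 - (x cp).1) + u.2 * ((x cs).2 - (x cp).2) = lam cs * u.1 := by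
  simp only [hx, eq_or_eq_iff_of_pair_eq hpair, true_or, or_true, if_true, hcp]
  ring

theorem margin_term_of_ne (hpair : ({cs, cp} : Finset τ) = {c1, c2})
    (hx : ∀ v, x v = (lam v, if v = c1 ∨ v = c2 then 1 else 0)) {v : τ} (hvs : v ≠ cs)
    (hvp : v ≠ cp) (u : ℝ × ℝ) :
    u.1 * ((x cs).1 - (x v).1) + u.2 * ((x cs).2 - (x v).2)
      = u.2 - (lam v - lam cs) * u.1 := by
  simp only [hx, eq_or_eq_iff_of_pair_eq hpair, hvs, hvp, true_or, or_self, if_true, if_false]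
  ring

end Margins

section Instances

variable {ι τ : Type*} [DecidableEq τ] {Vi Ni : ι → Finset τ} {c1 c2 cstar cperp : ι → τ} {lam : ι → τ → ℝ}

theorem isLeast_margins {x : ι → τ → ℝ × ℝ} {L D : ℝ} {u : ℝ × ℝ}
    (hA : 0 ≤ u.1) (hR : 0 ≤ u.2) (hsub : ∀ i, Ni i ⊆ Vi i) (hc1 : ∀ i, c1 i ∈ Vi i) (hc2 : ∀ i, c2 i ∈ Vi i)
    (hpair : ∀ i, ({cstar i, cperp i} : Finset τ) = {c1 i, c2 i})
    (hstar : ∀ i, cstar i ∈ Ni i) (hperp : ∀ i, cperp i ∉ Ni i)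
    (hlamzero : ∀ i v, v ∉ Ni i → lam i v = 0)
    (hx : ∀ i v, x i v = (lam i v, if v = c1 i ∨ v = c2 i then 1 else 0))
    (hL : IsLeast (range fun i => lam i (cstar i)) L)
    (hgap : ∀ i, ∀ v ∈ (Ni i).erase (cstar i), lam i v - lam i (cstar i) ≤ D)
    (hattain : ∃ i, ∃ v ∈ (Ni i).erase (cstar i), lam i v - lam i (cstar i) = D) :
    IsLeast {y | ∃ i, ∃ v ∈ (Vi i).erase (cstar i),
      y = u.1 * ((x i (cstar i)).1 - (x i v).1) + u.2 * ((x i (cstar i)).2 - (x i v).2)}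
      (reducedMargin L D u) := by
  obtain ⟨⟨i0, hi0⟩, hLle⟩ := hL
  obtain ⟨i1, v1, hv1, hv1D⟩ := hattain
  have hperp_mem : cperp i0 ∈ (Vi i0).erase (cstar i0) := by
    refine Finset.mem_erase.2 ⟨fun h => hperp i0 (h ▸ hstar i0), ?_⟩
    rcases (eq_or_eq_iff_of_pair_eq (hpair i0) _).2 (Or.inr rfl) with h | h
    exacts [h ▸ hc1 i0, h ▸ hc2 i0]
  have hv1_ne : v1 ≠ cperp i1 := fun h => hperp i1 (h ▸ (Finset.mem_erase.1 hv1).2)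
  refine ⟨?_, ?_⟩
  · rcases min_choice (L * u.1) (u.2 - D * u.1) with h | h <;> rw [reducedMargin, h]
    · refine ⟨i0, _, hperp_mem, ?_⟩
      rw [margin_term_perp (hpair i0) (hx i0) (hlamzero _ _ (hperp i0)), ← hi0]
    · refine ⟨i1, v1, Finset.erase_subset_erase _ (hsub i1) hv1, ?_⟩
      rw [margin_term_of_ne (hpair i1) (hx i1) (Finset.ne_of_mem_erase hv1) hv1_ne, hv1D]
  · rintro _ ⟨i, v, hv, rfl⟩
    have hLi : L * u.1 ≤ lam i (cstar i) * u.1 := mul_le_mul_of_nonneg_right (hLle ⟨i, rfl⟩) hA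
    obtain ⟨hvs, -⟩ := Finset.mem_erase.1 hv
    by_cases hvp : v = cperp i
    · subst hvp
      rw [margin_term_perp (hpair i) (hx i) (hlamzero _ _ (hperp i))]
      exact (min_le_left _ _).trans hLi
    rw [margin_term_of_ne (hpair i) (hx i) hvs hvp]
    by_cases hvN : v ∈ Ni i
    · have := mul_le_mul_of_nonneg_right (hgap i v (Finset.mem_erase.2 ⟨hvs, hvN⟩)) hA
      exact (min_le_right _ _).trans (by linarith)
    · rw [hlamzero i v hvN]
      exact (min_le_left _ _).trans (by linarith)

theorem bddAbove_gaps (hnonneg : ∀ i, 0 ≤ lam i (cstar i)) (hle : ∀ i v, lam i v ≤ 1) :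
    BddAbove (insert 0 {y : ℝ | ∃ i, ∃ v ∈ (Ni i).erase (cstar i),
      y = max (lam i v - lam i (cstar i)) 0}) := by
  refine ⟨1, ?_⟩
  rintro y (rfl | ⟨i, v, -, rfl⟩)
  · exact zero_le_one
  · exact max_le (by linarith [hle i v, hnonneg i]) zero_le_one

end Instances

theorem stmt16_general {ι τ : Type*} [Fintype ι] [DecidableEq τ]
    (Vi Ni : ι → Finset τ) (hsub : ∀ i, Ni i ⊆ Vi i)
    (c1 c2 cstar cperp : ι → τ)
    (hc1 : ∀ i, c1 i ∈ Vi i) (hc2 : ∀ i, c2 i ∈ Vi i)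
    (hpair : ∀ i, ({cstar i, cperp i} : Finset τ) = {c1 i, c2 i})
    (hstar : ∀ i, cstar i ∈ Ni i) (hperp : ∀ i, cperp i ∉ Ni i)
    (lam : ι → τ → ℝ)
    (hlampos : ∀ i, ∀ v ∈ Ni i, 0 < lam i v) (hlamle : ∀ i v, lam i v ≤ 1)
    (hlamzero : ∀ i v, v ∉ Ni i → lam i v = 0)
    (x : ι → τ → ℝ × ℝ)
    (hx : ∀ i v, x i v = (lam i v, if v = c1 i ∨ v = c2 i then 1 else 0))
    (lamStar : ℝ) (hlamStar : lamStar = sInf {y : ℝ | ∃ i : ι, y = lam i (cstar i)})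
    (ΔTrain : ℝ)
    (hΔTrain : ΔTrain = sSup (insert 0
      {y : ℝ | ∃ i : ι, ∃ v ∈ (Ni i).erase (cstar i),
        y = max (lam i v - lam i (cstar i)) 0}))
    (γ : ℝ × ℝ → ℝ)
    (hγ : ∀ u : ℝ × ℝ, γ u = sInf {y : ℝ | ∃ i : ι, ∃ v ∈ (Vi i).erase (cstar i),
      y = u.1 * ((x i (cstar i)).1 - (x i v).1) + u.2 * ((x i (cstar i)).2 - (x i v).2)})
    (hattain : ∃ i : ι, ∃ v ∈ (Ni i).erase (cstar i),
      lam i v - lam i (cstar i) = ΔTrain)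
    (ρ : ℝ) (hρ : ρ = lamStar + ΔTrain)
    (ustar : ℝ × ℝ)
    (hustar : ustar = (1 / Real.sqrt (1 + ρ ^ 2), ρ / Real.sqrt (1 + ρ ^ 2))) :
    (∀ u : ℝ × ℝ, 0 ≤ u.1 → 0 ≤ u.2 → u.1 ^ 2 + u.2 ^ 2 = 1 → γ u ≤ γ ustar)
    ∧ (∀ u : ℝ × ℝ, 0 ≤ u.1 → 0 ≤ u.2 → u.1 ^ 2 + u.2 ^ 2 = 1 →
        γ u = γ ustar → u = ustar)
    ∧ ustar.2 / ustar.1 = lamStar + ΔTrain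
    ∧ 0 < ustar.1 ∧ 0 < ustar.2 := by
  have : Nonempty ι := let ⟨i, _⟩ := hattain; ⟨i⟩
  have hL : IsLeast (range fun i => lam i (cstar i)) lamStar := by
    rw [hlamStar, show {y : ℝ | ∃ i, y = lam i (cstar i)} = range fun i => lam i (cstar i) from
      ext fun _ => exists_congr fun _ => eq_comm]
    exact isLeast_csInf_range _
  have hLpos : 0 < lamStar := by
    obtain ⟨i, hi⟩ := hL.1
    exact hi ▸ hlampos i _ (hstar i)
  have hbdd := bddAbove_gaps (Ni := Ni) (fun i => (hlampos i _ (hstar i)).le) hlamle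
  have hΔ0 : 0 ≤ ΔTrain := hΔTrain ▸ le_csSup hbdd (mem_insert _ _)
  have hgap : ∀ i, ∀ v ∈ (Ni i).erase (cstar i), lam i v - lam i (cstar i) ≤ ΔTrain :=
    fun i v hv => (le_max_left _ _).trans
      (hΔTrain ▸ le_csSup hbdd (mem_insert_of_mem _ ⟨i, v, hv, rfl⟩))
  have hγ_eq : ∀ u : ℝ × ℝ, 0 ≤ u.1 → 0 ≤ u.2 → γ u = reducedMargin lamStar ΔTrain u :=
    fun u hA hR => (hγ u).trans (isLeast_margins hA hR hsub hc1 hc2 hpair hstar hperp hlamzero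
      hx hL hgap hattain).csInf_eq
  have hus : ustar = optimalDirection (lamStar + ΔTrain) := by rw [hustar, hρ]; rfl
  obtain ⟨hus1, hus2⟩ := optimalDirection_pos (add_pos_of_pos_of_nonneg hLpos hΔ0)
  rw [← hus] at hus1 hus2
  refine ⟨fun u hA hR hu => ?_, fun u hA hR hu heq => ?_, hus ▸ optimalDirection_snd_div_fst _,
    hus1, hus2⟩
  · rw [hγ_eq u hA hR, hγ_eq _ hus1.le hus2.le, hus]
    exact reducedMargin_le_optimalDirection hLpos hΔ0 hu
  · rw [hγ_eq u hA hR, hγ_eq _ hus1.le hus2.le, hus] at heq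
    rw [hus]
    exact eq_optimalDirection_of_le_reducedMargin hLpos hΔ0 hu heq.ge

/-- the maximum of the margin γ over unit directions with nonnegative
coordinates is attained uniquely at u* = (1/√(1+ρ²), ρ/√(1+ρ²)) with ρ = λ_* + Δ_train;
in particular u*_R/u*_A = λ_* + Δ_train and both coordinates are positive. -/
theorem stmt16 {ι τ : Type*} [Fintype ι] [Nonempty ι] [DecidableEq τ]
    (Vi Ni : ι → Finset τ) (hsub : ∀ i, Ni i ⊆ Vi i)
    (c1 c2 cstar cperp : ι → τ)
    (hc1 : ∀ i, c1 i ∈ Vi i) (hc2 : ∀ i, c2 i ∈ Vi i) (hc12 : ∀ i, c1 i ≠ c2 i)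
    (hpair : ∀ i, ({cstar i, cperp i} : Finset τ) = {c1 i, c2 i})
    (hstar : ∀ i, cstar i ∈ Ni i) (hperp : ∀ i, cperp i ∉ Ni i)
    (lam : ι → τ → ℝ)
    (hlampos : ∀ i, ∀ v ∈ Ni i, 0 < lam i v) (hlamle : ∀ i v, lam i v ≤ 1)
    (hlamzero : ∀ i v, v ∉ Ni i → lam i v = 0)
    (x : ι → τ → ℝ × ℝ)
    (hx : ∀ i v, x i v = (lam i v, if v = c1 i ∨ v = c2 i then 1 else 0))
    (lamStar : ℝ) (hlamStar : lamStar = sInf {y : ℝ | ∃ i : ι, y = lam i (cstar i)})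
    (ΔTrain : ℝ)
    (hΔTrain : ΔTrain = sSup (insert 0
      {y : ℝ | ∃ i : ι, ∃ v ∈ (Ni i).erase (cstar i),
        y = max (lam i v - lam i (cstar i)) 0}))
    (γ : ℝ × ℝ → ℝ)
    (hγ : ∀ u : ℝ × ℝ, γ u = sInf {y : ℝ | ∃ i : ι, ∃ v ∈ (Vi i).erase (cstar i),
      y = u.1 * ((x i (cstar i)).1 - (x i v).1) + u.2 * ((x i (cstar i)).2 - (x i v).2)})
    (hattain : ∃ i : ι, ∃ v ∈ (Ni i).erase (cstar i),
      lam i v - lam i (cstar i) = ΔTrain)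
    (ρ : ℝ) (hρ : ρ = lamStar + ΔTrain)
    (ustar : ℝ × ℝ)
    (hustar : ustar = (1 / Real.sqrt (1 + ρ ^ 2), ρ / Real.sqrt (1 + ρ ^ 2))) :
    (∀ u : ℝ × ℝ, 0 ≤ u.1 → 0 ≤ u.2 → u.1 ^ 2 + u.2 ^ 2 = 1 → γ u ≤ γ ustar)
    ∧ (∀ u : ℝ × ℝ, 0 ≤ u.1 → 0 ≤ u.2 → u.1 ^ 2 + u.2 ^ 2 = 1 →
        γ u = γ ustar → u = ustar)
    ∧ ustar.2 / ustar.1 = lamStar + ΔTrain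
    ∧ 0 < ustar.1 ∧ 0 < ustar.2 :=
  stmt16_general Vi Ni hsub c1 c2 cstar cperp hc1 hc2 hpair hstar hperp lam hlampos hlamle hlamzero
    x hx lamStar hlamStar ΔTrain hΔTrain γ hγ hattain ρ hρ ustar hustar
end

section
/- Suppose the test instance satisfies max_{v ∈ N} λ_v − λ_{c_*} ≤ Δ for some Δ with Δ ≤ Δ_train. Then for every v ∈ V with v ≠ c_*, ⟨u^*, x_{c_*} − x_v⟩ ≥ min{ u_A^*·λ_*, u_A^*·λ_{c_*} } > 0. -/
/-- positive test-time margins from the trained direction u*: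
if max_{v ∈ N} λ_v − λ_{c⋆} ≤ Δ ≤ Δ_train, then for every competitor v ≠ c⋆,
⟨u*, x_{c⋆} − x_v⟩ ≥ min{u*_A·λ_*, u*_A·λ_{c⋆}} > 0. -/
theorem stmt17 {τ : Type*} [DecidableEq τ]
    (lamStar ΔTrain : ℝ)
    (hlamStar0 : 0 < lamStar) (hlamStar1 : lamStar ≤ 1)
    (hΔTrain0 : 0 ≤ ΔTrain) (hΔTrain1 : ΔTrain ≤ 1)
    (ρ : ℝ) (hρ : ρ = lamStar + ΔTrain)
    (ustar : ℝ × ℝ)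
    (hustar : ustar = (1 / Real.sqrt (1 + ρ ^ 2), ρ / Real.sqrt (1 + ρ ^ 2)))
    (Vt Nt : Finset τ) (hsub : Nt ⊆ Vt)
    (c1 c2 cstar cperp : τ)
    (hc1 : c1 ∈ Vt) (hc2 : c2 ∈ Vt) (hc12 : c1 ≠ c2)
    (hpair : ({cstar, cperp} : Finset τ) = {c1, c2})
    (hstar : cstar ∈ Nt) (hperp : cperp ∉ Nt)
    (lam : τ → ℝ)
    (hlampos : ∀ v ∈ Nt, 0 < lam v) (hlamle : ∀ v : τ, lam v ≤ 1)
    (hlamzero : ∀ v : τ, v ∉ Nt → lam v = 0)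
    (x : τ → ℝ × ℝ)
    (hx : ∀ v : τ, x v = (lam v, if v = c1 ∨ v = c2 then 1 else 0))
    (Δ : ℝ) (hΔle : Δ ≤ ΔTrain)
    (hmax : ∀ v ∈ Nt, lam v - lam cstar ≤ Δ) :
    ∀ v ∈ Vt, v ≠ cstar →
      min (ustar.1 * lamStar) (ustar.1 * lam cstar)
          ≤ ustar.1 * ((x cstar).1 - (x v).1) + ustar.2 * ((x cstar).2 - (x v).2)
      ∧ 0 < min (ustar.1 * lamStar) (ustar.1 * lam cstar) := by

  subst hustar
  intro v hv hvne
  set s := Real.sqrt (1 + ρ ^ 2) with hsdef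
  have hρpos : 0 < ρ := by rw [hρ]; linarith
  have hs : 0 < s := Real.sqrt_pos.mpr (by positivity)
  have hcsmem : cstar = c1 ∨ cstar = c2 := by
    have : cstar ∈ ({c1, c2} : Finset τ) := by rw [← hpair]; simp
    simpa using this
  have hcspos : 0 < lam cstar := hlampos _ hstar
  have hminpos : 0 < min ((1 / s) * lamStar) ((1 / s) * lam cstar) := by
    apply lt_min <;> positivity
  refine ⟨?_, hminpos⟩
  by_cases hvc : v = c1 ∨ v = c2
  · have hv' : v ∈ ({cstar, cperp} : Finset τ) := by
      rw [hpair]; simpa using hvc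
    have hvcp : v = cperp := by
      rcases Finset.mem_insert.mp hv' with h | h
      · exact absurd h hvne
      · simpa using h
    have hlamv : lam v = 0 := hlamzero _ (hvcp ▸ hperp)
    simp only [hx, hcsmem, hvc, if_pos, hlamv]
    have : (1 / s) * lam cstar ≤ 1 / s * (lam cstar - 0) + ρ / s * (1 - 1) := by
      ring_nf; rfl
    exact le_trans (min_le_right _ _) this
  · have hlamv_le : lam v - lam cstar ≤ ΔTrain := by
      by_cases hvN : v ∈ Nt
      · exact le_trans (hmax v hvN) hΔle
      · rw [hlamzero v hvN]; linarith
    have key : (1 / s) * lamStar ≤ 1 / s * (lam cstar - lam v) + ρ / s * (1 - 0) := by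
      have h1 : lamStar ≤ (lam cstar - lam v) + ρ := by rw [hρ]; linarith
      have h2 : (1 / s) * lamStar ≤ (1 / s) * ((lam cstar - lam v) + ρ) :=
        mul_le_mul_of_nonneg_left h1 (by positivity)
      calc (1 / s) * lamStar ≤ (1 / s) * ((lam cstar - lam v) + ρ) := h2
        _ = 1 / s * (lam cstar - lam v) + ρ / s * (1 - 0) := by ring
    simp only [hx, hcsmem, hvc, if_pos, if_neg, not_false_iff]
    exact le_trans (min_le_left _ _) key
end

section
/- Suppose the test instance satisfies max_{v ∈ N} λ_v − λ_{c_*} ≤ Δ for some Δ with Δ ≤ Δ_train. Let w : [0, ∞) → ℝ² satisfy ‖w(t)‖ → ∞ and w(t)/‖w(t)‖ → u^* as t → ∞. Define the logits ξ_v(t) = ⟨w(t), x_v⟩ for v ∈ V and the softmax probability p(t) = exp(ξ_{c_*}(t)) / Σ_{v ∈ V} exp(ξ_v(t)). Then ξ_{c_*}(t) − ξ_v(t) → +∞ for every v ≠ c_*, and consequently p(t) → 1 as t → ∞. -/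
/-!
A logit gap `ξ_{c⋆} - ξ_v` is the value of the linear functional `⟨·, x_{c⋆} - x_v⟩` at `w(t)`,
i.e. `‖w(t)‖` times its value at `w(t)/‖w(t)‖ → u*`. Since `√(1+ρ²) u* = (1, ρ)`, that limit has
the sign of the margin `(λ_{c⋆} - λ_v) + ρ (1 - 1{v ∈ {c₁, c₂}})`, which is `λ_{c⋆} > 0` against
`c_⊥` and at least `ρ - Δ > 0` against any non-candidate. So every gap grows like
`‖w(t)‖`, and the softmax mass of `c⋆` tends to `1`.
-/

open Filter Topology Real

theorem Filter.Tendsto.clm_atTop_of_smul_inv {α E : Type*} [AddCommGroup E] [Module ℝ E]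
    [TopologicalSpace E] {l : Filter α} {w : α → E} {r : α → ℝ} {u : E} (f : E →L[ℝ] ℝ)
    (hr : Tendsto r l atTop) (hdir : Tendsto (fun t => (r t)⁻¹ • w t) l (𝓝 u))
    (hu : 0 < f u) : Tendsto (fun t => f (w t)) l atTop := by
  refine (hr.atTop_mul_pos hu ((f.continuous.tendsto u).comp hdir)).congr' ?_
  filter_upwards [hr.eventually_gt_atTop 0] with t ht
  simp [ht.ne']

theorem tendsto_exp_div_sum_exp_of_tendsto_sub_atTop {ι α : Type*} [DecidableEq ι] {l : Filter α}
    {s : Finset ι} {c : ι} {ξ : ι → α → ℝ} (hc : c ∈ s)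
    (hgap : ∀ v ∈ s, v ≠ c → Tendsto (fun t => ξ c t - ξ v t) l atTop) :
    Tendsto (fun t => exp (ξ c t) / ∑ v ∈ s, exp (ξ v t)) l (𝓝 1) := by
  have hrest : Tendsto (fun t => ∑ v ∈ s.erase c, (exp (ξ c t - ξ v t))⁻¹) l (𝓝 0) := by
    simpa using tendsto_finsetSum _ fun v hv => tendsto_inv_atTop_zero.comp <|
      tendsto_exp_atTop.comp (hgap v (Finset.mem_of_mem_erase hv) (Finset.ne_of_mem_erase hv))
  have hsum : ∀ t, ∑ v ∈ s, exp (ξ v t) / exp (ξ c t)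
      = 1 + ∑ v ∈ s.erase c, (exp (ξ c t - ξ v t))⁻¹ := fun t => by
    rw [← Finset.add_sum_erase s _ hc, div_self (exp_pos _).ne']
    simp [exp_sub]
  have hlim := (tendsto_const_nhds (x := (1 : ℝ)).add hrest).inv₀ (by norm_num)
  rw [add_zero, inv_one] at hlim
  refine hlim.congr fun t => ?_
  rw [← hsum, ← Finset.sum_div, inv_div]

theorem candidate_margin_pos {τ : Type*} [DecidableEq τ] {N : Finset τ}
    {c1 c2 cstar cperp v : τ} {lam : τ → ℝ} {ρ Δ : ℝ}
    (hpair : ({cstar, cperp} : Finset τ) = {c1, c2}) (hperp : cperp ∉ N)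
    (hlamstar : 0 < lam cstar) (hlamzero : ∀ v, v ∉ N → lam v = 0)
    (hmax : ∀ v ∈ N, lam v - lam cstar ≤ Δ) (hΔρ : Δ < ρ) (hρ : 0 < ρ) (hv : v ≠ cstar) :
    0 < lam cstar - lam v + ρ * ((if cstar = c1 ∨ cstar = c2 then 1 else 0)
      - (if v = c1 ∨ v = c2 then 1 else 0)) := by
  have hcand : ∀ u, (u = c1 ∨ u = c2) ↔ (u = cstar ∨ u = cperp) := fun u => by
    simpa using (congrArg (u ∈ ·) hpair).to_iff.symm
  simp only [hcand, true_or, if_true, hv, false_or]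
  by_cases hvperp : v = cperp
  · simp [hvperp, hlamzero _ hperp, hlamstar]
  · rw [if_neg hvperp]
    by_cases hvN : v ∈ N
    · linarith [hmax v hvN]
    · linarith [hlamzero v hvN]

theorem stmt18_general {τ : Type*} [DecidableEq τ]
    (lamStar ΔTrain : ℝ)
    (hlamStar0 : 0 < lamStar)
    (hΔTrain0 : 0 ≤ ΔTrain)
    (ρ : ℝ) (hρ : ρ = lamStar + ΔTrain)
    (ustar : ℝ × ℝ)
    (hustar : ustar = (1 / Real.sqrt (1 + ρ ^ 2), ρ / Real.sqrt (1 + ρ ^ 2)))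
    (Vt Nt : Finset τ)
    (c1 c2 cstar cperp : τ)
    (hc1 : c1 ∈ Vt) (hc2 : c2 ∈ Vt)
    (hpair : ({cstar, cperp} : Finset τ) = {c1, c2})
    (hstar : cstar ∈ Nt) (hperp : cperp ∉ Nt)
    (lam : τ → ℝ)
    (hlampos : ∀ v ∈ Nt, 0 < lam v)
    (hlamzero : ∀ v : τ, v ∉ Nt → lam v = 0)
    (x : τ → ℝ × ℝ)
    (hx : ∀ v : τ, x v = (lam v, if v = c1 ∨ v = c2 then 1 else 0))
    (Δ : ℝ) (hΔle : Δ ≤ ΔTrain)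
    (hmax : ∀ v ∈ Nt, lam v - lam cstar ≤ Δ)
    (w : ℝ → ℝ × ℝ)
    (hnorm : Tendsto (fun t => Real.sqrt ((w t).1 ^ 2 + (w t).2 ^ 2)) atTop atTop)
    (hdir : Tendsto (fun t => (Real.sqrt ((w t).1 ^ 2 + (w t).2 ^ 2))⁻¹ • w t)
      atTop (nhds ustar))
    (ξ : τ → ℝ → ℝ)
    (hξ : ∀ v t, ξ v t = (w t).1 * (x v).1 + (w t).2 * (x v).2) :
    (∀ v ∈ Vt, v ≠ cstar → Tendsto (fun t => ξ cstar t - ξ v t) atTop atTop)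
    ∧ Tendsto (fun t => Real.exp (ξ cstar t) / ∑ v ∈ Vt, Real.exp (ξ v t))
        atTop (nhds 1) := by
  have hcstar : cstar ∈ Vt := Finset.insert_subset hc1 (Finset.singleton_subset_iff.2 hc2)
    (hpair ▸ Finset.mem_insert_self _ _)
  have gaps : ∀ v ∈ Vt, v ≠ cstar → Tendsto (fun t => ξ cstar t - ξ v t) atTop atTop := by
    intro v _ hv
    have hmargin := candidate_margin_pos hpair hperp (hlampos _ hstar) hlamzero hmax
      (by linarith : Δ < ρ) (by linarith) hv
    let f : ℝ × ℝ →L[ℝ] ℝ := (x cstar - x v).1 • ContinuousLinearMap.fst ℝ ℝ ℝ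
      + (x cstar - x v).2 • ContinuousLinearMap.snd ℝ ℝ ℝ
    have hf : ∀ z, f z = (x cstar - x v).1 * z.1 + (x cstar - x v).2 * z.2 := fun z => rfl
    refine (hnorm.clm_atTop_of_smul_inv f hdir ?_).congr fun t => ?_
    · have hfu : f ustar = (lam cstar - lam v + ρ * ((if cstar = c1 ∨ cstar = c2 then 1 else 0)
          - (if v = c1 ∨ v = c2 then 1 else 0))) / Real.sqrt (1 + ρ ^ 2) := by
        simp only [hf, hustar, hx, Prod.mk_sub_mk]
        ring
      rw [hfu]
      exact div_pos hmargin (by positivity)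
    · rw [hf, hξ, hξ, Prod.fst_sub, Prod.snd_sub]
      ring
  exact ⟨gaps, tendsto_exp_div_sum_exp_of_tendsto_sub_atTop hcstar gaps⟩

/-- if ‖w(t)‖ → ∞ and w(t)/‖w(t)‖ → u*, then on a test instance with
max_{v ∈ N} λ_v − λ_{c⋆} ≤ Δ ≤ Δ_train, every logit gap ξ_{c⋆}(t) − ξ_v(t) → +∞ and
the softmax probability of c⋆ tends to 1. -/
theorem stmt18 {τ : Type*} [DecidableEq τ]
    (lamStar ΔTrain : ℝ)
    (hlamStar0 : 0 < lamStar) (hlamStar1 : lamStar ≤ 1)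
    (hΔTrain0 : 0 ≤ ΔTrain) (hΔTrain1 : ΔTrain ≤ 1)
    (ρ : ℝ) (hρ : ρ = lamStar + ΔTrain)
    (ustar : ℝ × ℝ)
    (hustar : ustar = (1 / Real.sqrt (1 + ρ ^ 2), ρ / Real.sqrt (1 + ρ ^ 2)))
    (Vt Nt : Finset τ) (hsub : Nt ⊆ Vt)
    (c1 c2 cstar cperp : τ)
    (hc1 : c1 ∈ Vt) (hc2 : c2 ∈ Vt) (hc12 : c1 ≠ c2)
    (hpair : ({cstar, cperp} : Finset τ) = {c1, c2})
    (hstar : cstar ∈ Nt) (hperp : cperp ∉ Nt)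
    (lam : τ → ℝ)
    (hlampos : ∀ v ∈ Nt, 0 < lam v) (hlamle : ∀ v : τ, lam v ≤ 1)
    (hlamzero : ∀ v : τ, v ∉ Nt → lam v = 0)
    (x : τ → ℝ × ℝ)
    (hx : ∀ v : τ, x v = (lam v, if v = c1 ∨ v = c2 then 1 else 0))
    (Δ : ℝ) (hΔle : Δ ≤ ΔTrain)
    (hmax : ∀ v ∈ Nt, lam v - lam cstar ≤ Δ)
    (w : ℝ → ℝ × ℝ)
    (hnorm : Tendsto (fun t => Real.sqrt ((w t).1 ^ 2 + (w t).2 ^ 2)) atTop atTop)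
    (hdir : Tendsto (fun t => (Real.sqrt ((w t).1 ^ 2 + (w t).2 ^ 2))⁻¹ • w t)
      atTop (nhds ustar))
    (ξ : τ → ℝ → ℝ)
    (hξ : ∀ v t, ξ v t = (w t).1 * (x v).1 + (w t).2 * (x v).2) :
    (∀ v ∈ Vt, v ≠ cstar → Tendsto (fun t => ξ cstar t - ξ v t) atTop atTop)
    ∧ Tendsto (fun t => Real.exp (ξ cstar t) / ∑ v ∈ Vt, Real.exp (ξ v t))
        atTop (nhds 1) :=
  stmt18_general lamStar ΔTrain hlamStar0 hΔTrain0 ρ hρ ustar hustar Vt Nt c1 c2 cstar cperp hc1 hc2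
    hpair hstar hperp lam hlampos hlamzero x hx Δ hΔle hmax w hnorm hdir ξ hξ
end
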